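/- arXiv:2003.08291 — 5 statements merged into one kernel-verified Lean document; each statement's English description precedes it below -/
import Mathlib

section
/- Let M be a 4×4 positive semidefinite complex matrix (written M = (a_{ij}) in the basis |0⟩,|1⟩,|2⟩,|3⟩). Suppose that for all pairs of the 12 states |φ_1⟩, ..., |φ_12⟩ of Theorem 1 (defined with ω = e^{2πi/3}) that are mutually orthogonal, the post-measurement orthogonality conditions ⟨φ_s| (M ⊗ I_4) |φ_t⟩ = 0 hold for all s ≠ t. Then M is a scalar multiple of the identity matrix, i.e., M = a_{33}·I_4. -/
open scoped ComplexOrder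

noncomputable def omega3 : ℂ := Complex.exp (2 * Real.pi * Complex.I / 3)

/-- basis vector |k⟩ of ℂ⁴ -/
def ket4 (k : ℕ) : Fin 4 → ℂ := fun i => if (i : ℕ) = k then 1 else 0

/-- Σ_{j=0}^{2} ω^{t j} |j⟩ in ℂ⁴ -/
noncomputable def uvec (t : ℕ) : Fin 4 → ℂ :=
  fun j => if (j : ℕ) ≤ 2 then omega3 ^ (t * (j : ℕ)) else 0

/-- Σ_{j=0}^{2} ω^{t j} |j+1⟩ in ℂ⁴ -/
noncomputable def uvec' (t : ℕ) : Fin 4 → ℂ :=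
  fun j => if 1 ≤ (j : ℕ) then omega3 ^ (t * ((j : ℕ) - 1)) else 0

/-- product state a ⊗ b in ℂ⁴ ⊗ ℂ⁴ -/
def prod44 (a b : Fin 4 → ℂ) : Fin 4 × Fin 4 → ℂ := fun p => a p.1 * b p.2

/-- the 12 states of Theorem 1: k = t + 3·block, t = 0,1,2 -/
noncomputable def phi12 (k : Fin 12) : Fin 4 × Fin 4 → ℂ :=
  match (k : ℕ) / 3 with
  | 0 => prod44 (ket4 0) (uvec ((k : ℕ) % 3))
  | 1 => prod44 (uvec ((k : ℕ) % 3)) (ket4 3)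
  | 2 => prod44 (ket4 3) (uvec' ((k : ℕ) % 3))
  | _ => prod44 (uvec' ((k : ℕ) % 3)) (ket4 0)

/-- (M ⊗ I₄) applied to a vector of ℂ⁴ ⊗ ℂ⁴ -/
noncomputable def applyMI4 (M : Matrix (Fin 4) (Fin 4) ℂ) (x : Fin 4 × Fin 4 → ℂ) :
    Fin 4 × Fin 4 → ℂ :=
  fun p => ∑ k : Fin 4, M p.1 k * x (k, p.2)

/-! The twelve states are product states, so `⟨a ⊗ b| M ⊗ I |c ⊗ d⟩ = ⟨a|M|c⟩ ⟨b|d⟩`. Within the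
blocks `u_t ⊗ |3⟩` and `u'_t ⊗ |0⟩` the conditions say that the compressions of `M` to
`span {|0⟩, |1⟩, |2⟩}` and to `span {|1⟩, |2⟩, |3⟩}` are diagonal in the Fourier basis of `ℂ³`,
hence circulant. Pairing `|0⟩ ⊗ u_0` with the states `u'_t ⊗ |0⟩` says that the discrete Fourier
transforms of `(a₀₁, a₀₂, a₀₃)` and `(a₁₀, a₂₀, a₃₀)` vanish, so these entries are `0`. Two
overlapping circulant blocks whose first row and column vanish off the diagonal make `M` scalar. -/

open Matrix

lemma sum_fin_pow_eq_zero_of_pow_eq_one {R : Type*} [CommRing R] [IsDomain R] {n : ℕ} {ζ : R}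
    (h1 : ζ ≠ 1) (hn : ζ ^ n = 1) : ∑ j : Fin n, ζ ^ (j : ℕ) = 0 := by
  rw [Fin.sum_univ_eq_sum_range (fun j => ζ ^ j)]
  have h := geom_sum_mul ζ n
  rw [hn, sub_self] at h
  exact (mul_eq_zero.mp h).resolve_right (sub_ne_zero.mpr h1)

namespace Matrix

def dftMatrix (ω : ℂ) (n : ℕ) : Matrix (Fin n) (Fin n) ℂ := of fun i j => ω ^ ((i : ℕ) * j)

@[simp] lemma dftMatrix_apply {ω : ℂ} {n : ℕ} (i j : Fin n) :
    dftMatrix ω n i j = ω ^ ((i : ℕ) * j) :=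
  rfl

end Matrix

namespace IsPrimitiveRoot

variable {ω : ℂ} {n : ℕ}

lemma star_pow_mul_pow (hω : IsPrimitiveRoot ω n) (hn : n ≠ 0) (k : ℕ) :
    star (ω ^ k) * ω ^ k = 1 := by
  rw [Complex.star_def, ← Complex.normSq_eq_conj_mul_self, Complex.normSq_eq_norm_sq, norm_pow,
    hω.norm'_eq_one hn]
  simp

lemma pow_val_add_one [NeZero n] (hω : IsPrimitiveRoot ω n) (k : Fin n) :
    ω ^ ((k + 1 : Fin n) : ℕ) = ω ^ (k : ℕ) * ω := by
  have hmod := pow_mod_orderOf ω (k + 1)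
  rw [← hω.eq_orderOf] at hmod
  rw [Fin.val_add, Fin.val_one', Nat.add_mod_mod, hmod, pow_succ]

lemma conjTranspose_dftMatrix_mul_self (hω : IsPrimitiveRoot ω n) :
    (dftMatrix ω n)ᴴ * dftMatrix ω n = (n : ℂ) • 1 := by
  ext s t
  have hn : n ≠ 0 := (Fin.pos s).ne'
  set ζ := star (ω ^ (s : ℕ)) * ω ^ (t : ℕ)
  have hterm (j : Fin n) : star (ω ^ ((j : ℕ) * s)) * ω ^ ((j : ℕ) * t) = ζ ^ (j : ℕ) := by
    simp only [ζ, mul_pow, ← pow_mul, star_pow, mul_comm]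
  simp only [mul_apply, conjTranspose_apply, dftMatrix_apply, hterm, Matrix.smul_apply, one_apply,
    smul_eq_mul, mul_ite, mul_one, mul_zero]
  split_ifs with hst
  · subst hst
    rw [show ζ = 1 from hω.star_pow_mul_pow hn s]
    simp
  · refine sum_fin_pow_eq_zero_of_pow_eq_one
      (fun hζ => hst (Fin.ext (hω.pow_inj s.isLt t.isLt ?_))) ?_
    · rw [← mul_one (ω ^ (s : ℕ)), ← hζ, ← mul_assoc, mul_comm (ω ^ (s : ℕ)),
        hω.star_pow_mul_pow hn, one_mul]
    · rw [mul_pow, star_pow, ← pow_mul, ← pow_mul, mul_comm _ n, mul_comm _ n, pow_mul, pow_mul,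
        ← star_pow, hω.pow_eq_one, star_one, one_pow, one_pow, one_mul]

lemma dftMatrix_mul_conjTranspose_self (hω : IsPrimitiveRoot ω n) :
    dftMatrix ω n * (dftMatrix ω n)ᴴ = (n : ℂ) • 1 := by
  rcases eq_or_ne n 0 with rfl | hn
  · exact Subsingleton.elim _ _
  have hinv : ((n : ℂ)⁻¹ • (dftMatrix ω n)ᴴ) * dftMatrix ω n = 1 := by
    rw [Matrix.smul_mul, hω.conjTranspose_dftMatrix_mul_self, smul_smul,
      inv_mul_cancel₀ (by exact_mod_cast hn), one_smul]
  rw [← mul_eq_one_comm.mp hinv, Matrix.mul_smul, smul_smul,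
    mul_inv_cancel₀ (by exact_mod_cast hn), one_smul]

lemma isUnit_dftMatrix (hω : IsPrimitiveRoot ω n) : IsUnit (dftMatrix ω n) := by
  rcases eq_or_ne n 0 with rfl | hn
  · exact isUnit_of_subsingleton _
  refine (isUnit_iff_isUnit_det _).mpr
    (isUnit_det_of_left_inverse (B := (n : ℂ)⁻¹ • (dftMatrix ω n)ᴴ) ?_)
  rw [Matrix.smul_mul, hω.conjTranspose_dftMatrix_mul_self, smul_smul,
    inv_mul_cancel₀ (by exact_mod_cast hn), one_smul]

/-- Fourier inversion writes `A = n⁻² • F * D * Fᴴ` with `D` diagonal, and each term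
`F (i+1) s * star (F (j+1) s)` equals `F i s * star (F j s)` because `‖ω‖ = 1`. -/
lemma apply_add_one_add_one_of_isDiag [NeZero n] (hω : IsPrimitiveRoot ω n)
    {A : Matrix (Fin n) (Fin n) ℂ} (hA : ((dftMatrix ω n)ᴴ * A * dftMatrix ω n).IsDiag)
    (i j : Fin n) : A (i + 1) (j + 1) = A i j := by
  set F := dftMatrix ω n
  have hn : (n : ℂ) ≠ 0 := by exact_mod_cast NeZero.ne n
  have hA' : A = ((n : ℂ) ^ 2)⁻¹ • (F * diagonal (Fᴴ * A * F).diag * Fᴴ) := by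
    rw [hA.diagonal_diag, show F * (Fᴴ * A * F) * Fᴴ = (F * Fᴴ) * A * (F * Fᴴ) by
      simp only [Matrix.mul_assoc], hω.dftMatrix_mul_conjTranspose_self, Matrix.smul_mul,
      Matrix.mul_smul, Matrix.one_mul, Matrix.mul_one, smul_smul, smul_smul, mul_assoc, ← sq,
      inv_mul_cancel₀ (pow_ne_zero 2 hn), one_smul]
  rw [hA', Matrix.smul_apply, Matrix.smul_apply, mul_apply, mul_apply]
  simp only [mul_diagonal, conjTranspose_apply, F, dftMatrix_apply]
  congr 2
  funext s
  rw [pow_mul, pow_mul, hω.pow_val_add_one, hω.pow_val_add_one, mul_pow, mul_pow, star_mul,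
    ← pow_mul, ← pow_mul]
  linear_combination (ω ^ ((i : ℕ) * s) * (Fᴴ * A * F).diag s * star (ω ^ ((j : ℕ) * s))) *
    hω.star_pow_mul_pow (NeZero.ne n) s

end IsPrimitiveRoot

lemma isPrimitiveRoot_omega3 : IsPrimitiveRoot omega3 3 := by
  simpa [omega3] using Complex.isPrimitiveRoot_exp 3 (by norm_num)

lemma ket4_val (k : Fin 4) : ket4 k = Pi.single k 1 := by
  ext i
  simp [ket4, Pi.single_apply, Fin.ext_iff]

lemma ket4_zero : ket4 0 = Pi.single (0 : Fin 4) 1 :=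
  ket4_val 0

lemma sum_conj_prod44_mul_applyMI4 (M : Matrix (Fin 4) (Fin 4) ℂ) (a b c d : Fin 4 → ℂ) :
    ∑ p, starRingEnd ℂ (prod44 a b p) * applyMI4 M (prod44 c d) p =
      (star a ⬝ᵥ M *ᵥ c) * (star b ⬝ᵥ d) := by
  simp only [prod44, applyMI4, Fintype.sum_prod_type, dotProduct, mulVec, Finset.sum_mul_sum]
  refine Finset.sum_congr rfl fun i _ => Finset.sum_congr rfl fun j _ => ?_
  simp only [map_mul, Finset.mul_sum, Finset.sum_mul, Pi.star_apply, Complex.star_def]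
  refine Finset.sum_congr rfl fun k _ => ?_
  ring

lemma star_ket4_dotProduct_ket4 {k : ℕ} (hk : k < 4) : star (ket4 k) ⬝ᵥ ket4 k = 1 := by
  rw [show ket4 k = Pi.single (⟨k, hk⟩ : Fin 4) 1 from ket4_val ⟨k, hk⟩]
  simp

lemma star_uvec_zero_dotProduct_ket4_zero : star (uvec 0) ⬝ᵥ ket4 0 = 1 := by
  simp [ket4_zero, uvec]

lemma star_ket4_zero_dotProduct_uvec_zero : star (ket4 0) ⬝ᵥ uvec 0 = 1 := by
  simp [ket4_zero, uvec]

lemma uvec_castSucc (t j : Fin 3) : uvec t j.castSucc = dftMatrix omega3 3 j t := by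
  simp [uvec, Nat.le_of_lt_succ j.isLt, mul_comm]

lemma uvec_last (t : ℕ) : uvec t (Fin.last 3) = 0 := by
  simp [uvec]

lemma uvec'_succ (t j : Fin 3) : uvec' t j.succ = dftMatrix omega3 3 j t := by
  simp [uvec', mul_comm]

lemma uvec'_zero (t : ℕ) : uvec' t 0 = 0 := by
  simp [uvec']

lemma star_uvec_dotProduct_mulVec_uvec (M : Matrix (Fin 4) (Fin 4) ℂ) (s t : Fin 3) :
    star (uvec s) ⬝ᵥ M *ᵥ uvec t =
      ((dftMatrix omega3 3)ᴴ * M.submatrix Fin.castSucc Fin.castSucc * dftMatrix omega3 3) s t := by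
  simp only [dotProduct, mulVec, mul_apply, Fin.sum_univ_castSucc (n := 3), uvec_castSucc,
    uvec_last, Pi.star_apply, star_zero, zero_mul, mul_zero, add_zero, submatrix_apply,
    conjTranspose_apply, Finset.mul_sum, Finset.sum_mul]
  rw [Finset.sum_comm]
  simp only [Finset.sum_const_zero, add_zero, mul_assoc]

lemma star_uvec'_dotProduct_mulVec_uvec' (M : Matrix (Fin 4) (Fin 4) ℂ) (s t : Fin 3) :
    star (uvec' s) ⬝ᵥ M *ᵥ uvec' t =
      ((dftMatrix omega3 3)ᴴ * M.submatrix Fin.succ Fin.succ * dftMatrix omega3 3) s t := by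
  simp only [dotProduct, mulVec, mul_apply, Fin.sum_univ_succ (n := 3), uvec'_succ, uvec'_zero,
    Pi.star_apply, star_zero, zero_mul, mul_zero, zero_add, submatrix_apply, conjTranspose_apply,
    Finset.mul_sum, Finset.sum_mul]
  rw [Finset.sum_comm]
  simp only [Finset.sum_const_zero, zero_add, mul_assoc]

lemma star_ket4_zero_dotProduct_mulVec_uvec' (M : Matrix (Fin 4) (Fin 4) ℂ) (t : Fin 3) :
    star (ket4 0) ⬝ᵥ M *ᵥ uvec' t = ((fun j => M 0 j.succ) ᵥ* dftMatrix omega3 3) t := by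
  rw [ket4_zero, Pi.star_single, star_one, single_one_dotProduct]
  simp only [mulVec, vecMul, dotProduct, Fin.sum_univ_succ (n := 3), uvec'_succ, uvec'_zero,
    mul_zero, zero_add]

lemma star_uvec'_dotProduct_mulVec_ket4_zero (M : Matrix (Fin 4) (Fin 4) ℂ) (t : Fin 3) :
    star (uvec' t) ⬝ᵥ M *ᵥ ket4 0 = ((dftMatrix omega3 3)ᴴ *ᵥ fun j => M j.succ 0) t := by
  rw [ket4_zero, mulVec_single_one]
  simp only [mulVec, dotProduct, Fin.sum_univ_succ (n := 3), uvec'_succ, uvec'_zero, Pi.star_apply,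
    star_zero, zero_mul, zero_add, col_apply, conjTranspose_apply]

lemma phi12_zero : phi12 0 = prod44 (ket4 0) (uvec 0) :=
  rfl

lemma phi12_three_add (t : Fin 3) : phi12 ⟨3 + t, by omega⟩ = prod44 (uvec t) (ket4 3) := by
  fin_cases t <;> rfl

lemma phi12_nine_add (t : Fin 3) : phi12 ⟨9 + t, by omega⟩ = prod44 (uvec' t) (ket4 0) := by
  fin_cases t <;> rfl

section Orthogonality

variable {M : Matrix (Fin 4) (Fin 4) ℂ}
  (horth : ∀ s t : Fin 12, s ≠ t →
    ∑ p : Fin 4 × Fin 4, (starRingEnd ℂ) (phi12 s p) * applyMI4 M (phi12 t) p = 0)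
include horth

lemma isDiag_dft_submatrix_castSucc :
    ((dftMatrix omega3 3)ᴴ * M.submatrix Fin.castSucc Fin.castSucc * dftMatrix omega3 3).IsDiag :=
  fun s t hst => by
    have h := horth ⟨3 + s, by omega⟩ ⟨3 + t, by omega⟩ (by simpa [Fin.ext_iff] using hst)
    rwa [phi12_three_add, phi12_three_add, sum_conj_prod44_mul_applyMI4,
      star_uvec_dotProduct_mulVec_uvec, star_ket4_dotProduct_ket4 (by norm_num), mul_one] at h

lemma isDiag_dft_submatrix_succ :
    ((dftMatrix omega3 3)ᴴ * M.submatrix Fin.succ Fin.succ * dftMatrix omega3 3).IsDiag :=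
  fun s t hst => by
    have h := horth ⟨9 + s, by omega⟩ ⟨9 + t, by omega⟩ (by simpa [Fin.ext_iff] using hst)
    rwa [phi12_nine_add, phi12_nine_add, sum_conj_prod44_mul_applyMI4,
      star_uvec'_dotProduct_mulVec_uvec', star_ket4_dotProduct_ket4 (by norm_num), mul_one] at h

lemma apply_zero_succ_eq_zero (j : Fin 3) : M 0 j.succ = 0 := by
  have h : (fun j : Fin 3 => M 0 j.succ) ᵥ* dftMatrix omega3 3 = 0 := funext fun t => by
    have h := horth 0 ⟨9 + t, by omega⟩ (Fin.ne_of_val_ne (by simp; omega))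
    rwa [phi12_zero, phi12_nine_add, sum_conj_prod44_mul_applyMI4,
      star_ket4_zero_dotProduct_mulVec_uvec', star_uvec_zero_dotProduct_ket4_zero, mul_one] at h
  exact congrFun (vecMul_injective_iff_isUnit.mpr isPrimitiveRoot_omega3.isUnit_dftMatrix
    (h.trans (zero_vecMul _).symm)) j

lemma apply_succ_zero_eq_zero (j : Fin 3) : M j.succ 0 = 0 := by
  have h : (dftMatrix omega3 3)ᴴ *ᵥ (fun j : Fin 3 => M j.succ 0) = 0 := funext fun t => by
    have h := horth ⟨9 + t, by omega⟩ 0 (Fin.ne_of_val_ne (by simp))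
    rwa [phi12_zero, phi12_nine_add, sum_conj_prod44_mul_applyMI4,
      star_uvec'_dotProduct_mulVec_ket4_zero, star_ket4_zero_dotProduct_uvec_zero, mul_one] at h
  exact congrFun (mulVec_injective_iff_isUnit.mpr
    ((isUnit_conjTranspose _).mpr isPrimitiveRoot_omega3.isUnit_dftMatrix)
    (h.trans (mulVec_zero _).symm)) j

end Orthogonality

theorem povm_trivial_dim4_general (M : Matrix (Fin 4) (Fin 4) ℂ)
    (horth : ∀ s t : Fin 12, s ≠ t →
      ∑ p : Fin 4 × Fin 4, (starRingEnd ℂ) (phi12 s p) * applyMI4 M (phi12 t) p = 0) :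
    M = M 3 3 • (1 : Matrix (Fin 4) (Fin 4) ℂ) := by
  have hB := isPrimitiveRoot_omega3.apply_add_one_add_one_of_isDiag
    (isDiag_dft_submatrix_castSucc horth)
  have hD := isPrimitiveRoot_omega3.apply_add_one_add_one_of_isDiag
    (isDiag_dft_submatrix_succ horth)
  have hrow : M 0 1 = 0 ∧ M 0 2 = 0 ∧ M 0 3 = 0 :=
    ⟨apply_zero_succ_eq_zero horth 0, apply_zero_succ_eq_zero horth 1,
      apply_zero_succ_eq_zero horth 2⟩
  have hcol : M 1 0 = 0 ∧ M 2 0 = 0 ∧ M 3 0 = 0 :=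
    ⟨apply_succ_zero_eq_zero horth 0, apply_succ_zero_eq_zero horth 1,
      apply_succ_zero_eq_zero horth 2⟩
  have hdiag : M 1 1 = M 0 0 ∧ M 2 2 = M 1 1 ∧ M 3 3 = M 2 2 := ⟨hB 0 0, hB 1 1, hD 1 1⟩
  have hsuper : M 1 2 = M 0 1 ∧ M 2 3 = M 1 2 ∧ M 3 1 = M 1 2 := ⟨hB 0 1, hD 0 1, (hD 2 0).symm⟩
  have hsub : M 2 1 = M 1 0 ∧ M 3 2 = M 2 1 ∧ M 1 3 = M 2 1 := ⟨hB 1 0, hD 1 0, (hD 0 2).symm⟩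
  ext i j
  rw [Matrix.smul_apply, one_apply, smul_eq_mul]
  fin_cases i <;> fin_cases j <;> grind

theorem povm_trivial_dim4 (M : Matrix (Fin 4) (Fin 4) ℂ) (hM : M.PosSemidef)
    (horth : ∀ s t : Fin 12, s ≠ t →
      ∑ p : Fin 4 × Fin 4, (starRingEnd ℂ) (phi12 s p) * applyMI4 M (phi12 t) p = 0) :
    M = M 3 3 • (1 : Matrix (Fin 4) (Fin 4) ℂ) :=
  povm_trivial_dim4_general M horth
end

section
/- Let M be a 5×5 complex matrix (entries a_{ij}, i,j ∈ {0,...,4}) such that ⟨φ_s| (M ⊗ I_5) |φ_t⟩ = 0 for every pair s ≠ t among the 16 states |φ_1⟩,...,|φ_16⟩ of Eqs. (32) (i.e., the post-measurement states preserve mutual orthogonality). Then M is a scalar multiple of the 5×5 identity matrix. -/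
/-- basis vector |k⟩ of ℂ⁵ -/
def ket5 (k : ℕ) : Fin 5 → ℂ := fun i => if (i : ℕ) = k then 1 else 0

/-- |k⟩ ± |l⟩ in ℂ⁵ (`s = true` is `+`, `s = false` is `-`) -/
def pm5 (k l : ℕ) (s : Bool) : Fin 5 → ℂ :=
  fun i => (if (i : ℕ) = k then 1 else 0) + (if s then 1 else -1) * (if (i : ℕ) = l then 1 else 0)

/-- product state a ⊗ b in ℂ⁵ ⊗ ℂ⁵ -/
def prod55 (a b : Fin 5 → ℂ) : Fin 5 × Fin 5 → ℂ := fun p => a p.1 * b p.2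

/-- the 16 states of Eqs. (32); state number `k+1` corresponds to index `k : Fin 16`,
the sign is `+` for even `k` and `-` for odd `k`. -/
def phi16 (k : Fin 16) : Fin 5 × Fin 5 → ℂ :=
  match (k : ℕ) / 2, ((k : ℕ) % 2 = 0 : Bool) with
  | 0, s => prod55 (ket5 0) (pm5 0 1 s)
  | 1, s => prod55 (ket5 0) (pm5 2 3 s)
  | 2, s => prod55 (pm5 0 1 s) (ket5 4)
  | 3, s => prod55 (pm5 2 3 s) (ket5 4)
  | 4, s => prod55 (ket5 4) (pm5 3 4 s)
  | 5, s => prod55 (ket5 4) (pm5 1 2 s)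
  | 6, s => prod55 (pm5 3 4 s) (ket5 0)
  | _, s => prod55 (pm5 1 2 s) (ket5 0)

/-- (M ⊗ I₅) applied to a vector of ℂ⁵ ⊗ ℂ⁵ -/
noncomputable def applyMI5 (M : Matrix (Fin 5) (Fin 5) ℂ) (x : Fin 5 × Fin 5 → ℂ) :
    Fin 5 × Fin 5 → ℂ :=
  fun p => ∑ k : Fin 5, M p.1 k * x (k, p.2)

set_option maxHeartbeats 2000000 in
theorem povm_trivial_dim5 (M : Matrix (Fin 5) (Fin 5) ℂ)
    (horth : ∀ s t : Fin 16, s ≠ t →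
      ∑ p : Fin 5 × Fin 5, (starRingEnd ℂ) (phi16 s p) * applyMI5 M (phi16 t) p = 0) :
    ∃ c : ℂ, M = c • (1 : Matrix (Fin 5) (Fin 5) ℂ) := by
  refine ⟨M 4 4, ?_⟩
  have p0 : phi16 0 = prod55 (ket5 0) (pm5 0 1 true) := rfl
  have p1 : phi16 1 = prod55 (ket5 0) (pm5 0 1 false) := rfl
  have p2 : phi16 2 = prod55 (ket5 0) (pm5 2 3 true) := rfl
  have p3 : phi16 3 = prod55 (ket5 0) (pm5 2 3 false) := rfl
  have p4 : phi16 4 = prod55 (pm5 0 1 true) (ket5 4) := rfl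
  have p5 : phi16 5 = prod55 (pm5 0 1 false) (ket5 4) := rfl
  have p6 : phi16 6 = prod55 (pm5 2 3 true) (ket5 4) := rfl
  have p7 : phi16 7 = prod55 (pm5 2 3 false) (ket5 4) := rfl
  have p8 : phi16 8 = prod55 (ket5 4) (pm5 3 4 true) := rfl
  have p9 : phi16 9 = prod55 (ket5 4) (pm5 3 4 false) := rfl
  have p10 : phi16 10 = prod55 (ket5 4) (pm5 1 2 true) := rfl
  have p11 : phi16 11 = prod55 (ket5 4) (pm5 1 2 false) := rfl
  have p12 : phi16 12 = prod55 (pm5 3 4 true) (ket5 0) := rfl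
  have p13 : phi16 13 = prod55 (pm5 3 4 false) (ket5 0) := rfl
  have p14 : phi16 14 = prod55 (pm5 1 2 true) (ket5 0) := rfl
  have p15 : phi16 15 = prod55 (pm5 1 2 false) (ket5 0) := rfl
  have h1 := horth 0 12 (by decide)
  simp only [prod55, ket5, pm5, applyMI5, Fintype.sum_prod_type, Fin.sum_univ_five, p0, p1, p2, p3, p4, p5, p6, p7, p8, p9, p10, p11, p12, p13, p14, p15, show ((0:Fin 5):ℕ)=0 from rfl, show ((1:Fin 5):ℕ)=1 from rfl, show ((2:Fin 5):ℕ)=2 from rfl, show ((3:Fin 5):ℕ)=3 from rfl, show ((4:Fin 5):ℕ)=4 from rfl] at h1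
  norm_num at h1
  have h2 := horth 0 13 (by decide)
  simp only [prod55, ket5, pm5, applyMI5, Fintype.sum_prod_type, Fin.sum_univ_five, p0, p1, p2, p3, p4, p5, p6, p7, p8, p9, p10, p11, p12, p13, p14, p15, show ((0:Fin 5):ℕ)=0 from rfl, show ((1:Fin 5):ℕ)=1 from rfl, show ((2:Fin 5):ℕ)=2 from rfl, show ((3:Fin 5):ℕ)=3 from rfl, show ((4:Fin 5):ℕ)=4 from rfl] at h2
  norm_num at h2
  have h3 := horth 0 14 (by decide)
  simp only [prod55, ket5, pm5, applyMI5, Fintype.sum_prod_type, Fin.sum_univ_five, p0, p1, p2, p3, p4, p5, p6, p7, p8, p9, p10, p11, p12, p13, p14, p15, show ((0:Fin 5):ℕ)=0 from rfl, show ((1:Fin 5):ℕ)=1 from rfl, show ((2:Fin 5):ℕ)=2 from rfl, show ((3:Fin 5):ℕ)=3 from rfl, show ((4:Fin 5):ℕ)=4 from rfl] at h3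
  norm_num at h3
  have h4 := horth 0 15 (by decide)
  simp only [prod55, ket5, pm5, applyMI5, Fintype.sum_prod_type, Fin.sum_univ_five, p0, p1, p2, p3, p4, p5, p6, p7, p8, p9, p10, p11, p12, p13, p14, p15, show ((0:Fin 5):ℕ)=0 from rfl, show ((1:Fin 5):ℕ)=1 from rfl, show ((2:Fin 5):ℕ)=2 from rfl, show ((3:Fin 5):ℕ)=3 from rfl, show ((4:Fin 5):ℕ)=4 from rfl] at h4
  norm_num at h4
  have h6 := horth 4 5 (by decide)
  simp only [prod55, ket5, pm5, applyMI5, Fintype.sum_prod_type, Fin.sum_univ_five, p0, p1, p2, p3, p4, p5, p6, p7, p8, p9, p10, p11, p12, p13, p14, p15, show ((0:Fin 5):ℕ)=0 from rfl, show ((1:Fin 5):ℕ)=1 from rfl, show ((2:Fin 5):ℕ)=2 from rfl, show ((3:Fin 5):ℕ)=3 from rfl, show ((4:Fin 5):ℕ)=4 from rfl] at h6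
  norm_num at h6
  have h7 := horth 4 6 (by decide)
  simp only [prod55, ket5, pm5, applyMI5, Fintype.sum_prod_type, Fin.sum_univ_five, p0, p1, p2, p3, p4, p5, p6, p7, p8, p9, p10, p11, p12, p13, p14, p15, show ((0:Fin 5):ℕ)=0 from rfl, show ((1:Fin 5):ℕ)=1 from rfl, show ((2:Fin 5):ℕ)=2 from rfl, show ((3:Fin 5):ℕ)=3 from rfl, show ((4:Fin 5):ℕ)=4 from rfl] at h7
  norm_num at h7
  have h8 := horth 4 7 (by decide)
  simp only [prod55, ket5, pm5, applyMI5, Fintype.sum_prod_type, Fin.sum_univ_five, p0, p1, p2, p3, p4, p5, p6, p7, p8, p9, p10, p11, p12, p13, p14, p15, show ((0:Fin 5):ℕ)=0 from rfl, show ((1:Fin 5):ℕ)=1 from rfl, show ((2:Fin 5):ℕ)=2 from rfl, show ((3:Fin 5):ℕ)=3 from rfl, show ((4:Fin 5):ℕ)=4 from rfl] at h8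
  norm_num at h8
  have h9 := horth 4 8 (by decide)
  simp only [prod55, ket5, pm5, applyMI5, Fintype.sum_prod_type, Fin.sum_univ_five, p0, p1, p2, p3, p4, p5, p6, p7, p8, p9, p10, p11, p12, p13, p14, p15, show ((0:Fin 5):ℕ)=0 from rfl, show ((1:Fin 5):ℕ)=1 from rfl, show ((2:Fin 5):ℕ)=2 from rfl, show ((3:Fin 5):ℕ)=3 from rfl, show ((4:Fin 5):ℕ)=4 from rfl] at h9
  norm_num at h9
  have h11 := horth 5 4 (by decide)
  simp only [prod55, ket5, pm5, applyMI5, Fintype.sum_prod_type, Fin.sum_univ_five, p0, p1, p2, p3, p4, p5, p6, p7, p8, p9, p10, p11, p12, p13, p14, p15, show ((0:Fin 5):ℕ)=0 from rfl, show ((1:Fin 5):ℕ)=1 from rfl, show ((2:Fin 5):ℕ)=2 from rfl, show ((3:Fin 5):ℕ)=3 from rfl, show ((4:Fin 5):ℕ)=4 from rfl] at h11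
  norm_num at h11
  have h16 := horth 6 4 (by decide)
  simp only [prod55, ket5, pm5, applyMI5, Fintype.sum_prod_type, Fin.sum_univ_five, p0, p1, p2, p3, p4, p5, p6, p7, p8, p9, p10, p11, p12, p13, p14, p15, show ((0:Fin 5):ℕ)=0 from rfl, show ((1:Fin 5):ℕ)=1 from rfl, show ((2:Fin 5):ℕ)=2 from rfl, show ((3:Fin 5):ℕ)=3 from rfl, show ((4:Fin 5):ℕ)=4 from rfl] at h16
  norm_num at h16
  have h17 := horth 6 5 (by decide)
  simp only [prod55, ket5, pm5, applyMI5, Fintype.sum_prod_type, Fin.sum_univ_five, p0, p1, p2, p3, p4, p5, p6, p7, p8, p9, p10, p11, p12, p13, p14, p15, show ((0:Fin 5):ℕ)=0 from rfl, show ((1:Fin 5):ℕ)=1 from rfl, show ((2:Fin 5):ℕ)=2 from rfl, show ((3:Fin 5):ℕ)=3 from rfl, show ((4:Fin 5):ℕ)=4 from rfl] at h17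
  norm_num at h17
  have h18 := horth 6 7 (by decide)
  simp only [prod55, ket5, pm5, applyMI5, Fintype.sum_prod_type, Fin.sum_univ_five, p0, p1, p2, p3, p4, p5, p6, p7, p8, p9, p10, p11, p12, p13, p14, p15, show ((0:Fin 5):ℕ)=0 from rfl, show ((1:Fin 5):ℕ)=1 from rfl, show ((2:Fin 5):ℕ)=2 from rfl, show ((3:Fin 5):ℕ)=3 from rfl, show ((4:Fin 5):ℕ)=4 from rfl] at h18
  norm_num at h18
  have h19 := horth 6 8 (by decide)
  simp only [prod55, ket5, pm5, applyMI5, Fintype.sum_prod_type, Fin.sum_univ_five, p0, p1, p2, p3, p4, p5, p6, p7, p8, p9, p10, p11, p12, p13, p14, p15, show ((0:Fin 5):ℕ)=0 from rfl, show ((1:Fin 5):ℕ)=1 from rfl, show ((2:Fin 5):ℕ)=2 from rfl, show ((3:Fin 5):ℕ)=3 from rfl, show ((4:Fin 5):ℕ)=4 from rfl] at h19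
  norm_num at h19
  have h21 := horth 7 4 (by decide)
  simp only [prod55, ket5, pm5, applyMI5, Fintype.sum_prod_type, Fin.sum_univ_five, p0, p1, p2, p3, p4, p5, p6, p7, p8, p9, p10, p11, p12, p13, p14, p15, show ((0:Fin 5):ℕ)=0 from rfl, show ((1:Fin 5):ℕ)=1 from rfl, show ((2:Fin 5):ℕ)=2 from rfl, show ((3:Fin 5):ℕ)=3 from rfl, show ((4:Fin 5):ℕ)=4 from rfl] at h21
  norm_num at h21
  have h22 := horth 7 5 (by decide)
  simp only [prod55, ket5, pm5, applyMI5, Fintype.sum_prod_type, Fin.sum_univ_five, p0, p1, p2, p3, p4, p5, p6, p7, p8, p9, p10, p11, p12, p13, p14, p15, show ((0:Fin 5):ℕ)=0 from rfl, show ((1:Fin 5):ℕ)=1 from rfl, show ((2:Fin 5):ℕ)=2 from rfl, show ((3:Fin 5):ℕ)=3 from rfl, show ((4:Fin 5):ℕ)=4 from rfl] at h22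
  norm_num at h22
  have h23 := horth 7 6 (by decide)
  simp only [prod55, ket5, pm5, applyMI5, Fintype.sum_prod_type, Fin.sum_univ_five, p0, p1, p2, p3, p4, p5, p6, p7, p8, p9, p10, p11, p12, p13, p14, p15, show ((0:Fin 5):ℕ)=0 from rfl, show ((1:Fin 5):ℕ)=1 from rfl, show ((2:Fin 5):ℕ)=2 from rfl, show ((3:Fin 5):ℕ)=3 from rfl, show ((4:Fin 5):ℕ)=4 from rfl] at h23
  norm_num at h23
  have h24 := horth 7 8 (by decide)
  simp only [prod55, ket5, pm5, applyMI5, Fintype.sum_prod_type, Fin.sum_univ_five, p0, p1, p2, p3, p4, p5, p6, p7, p8, p9, p10, p11, p12, p13, p14, p15, show ((0:Fin 5):ℕ)=0 from rfl, show ((1:Fin 5):ℕ)=1 from rfl, show ((2:Fin 5):ℕ)=2 from rfl, show ((3:Fin 5):ℕ)=3 from rfl, show ((4:Fin 5):ℕ)=4 from rfl] at h24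
  norm_num at h24
  have h26 := horth 8 2 (by decide)
  simp only [prod55, ket5, pm5, applyMI5, Fintype.sum_prod_type, Fin.sum_univ_five, p0, p1, p2, p3, p4, p5, p6, p7, p8, p9, p10, p11, p12, p13, p14, p15, show ((0:Fin 5):ℕ)=0 from rfl, show ((1:Fin 5):ℕ)=1 from rfl, show ((2:Fin 5):ℕ)=2 from rfl, show ((3:Fin 5):ℕ)=3 from rfl, show ((4:Fin 5):ℕ)=4 from rfl] at h26
  norm_num at h26
  have h28 := horth 8 4 (by decide)
  simp only [prod55, ket5, pm5, applyMI5, Fintype.sum_prod_type, Fin.sum_univ_five, p0, p1, p2, p3, p4, p5, p6, p7, p8, p9, p10, p11, p12, p13, p14, p15, show ((0:Fin 5):ℕ)=0 from rfl, show ((1:Fin 5):ℕ)=1 from rfl, show ((2:Fin 5):ℕ)=2 from rfl, show ((3:Fin 5):ℕ)=3 from rfl, show ((4:Fin 5):ℕ)=4 from rfl] at h28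
  norm_num at h28
  have h30 := horth 8 6 (by decide)
  simp only [prod55, ket5, pm5, applyMI5, Fintype.sum_prod_type, Fin.sum_univ_five, p0, p1, p2, p3, p4, p5, p6, p7, p8, p9, p10, p11, p12, p13, p14, p15, show ((0:Fin 5):ℕ)=0 from rfl, show ((1:Fin 5):ℕ)=1 from rfl, show ((2:Fin 5):ℕ)=2 from rfl, show ((3:Fin 5):ℕ)=3 from rfl, show ((4:Fin 5):ℕ)=4 from rfl] at h30
  norm_num at h30
  have h31 := horth 8 7 (by decide)
  simp only [prod55, ket5, pm5, applyMI5, Fintype.sum_prod_type, Fin.sum_univ_five, p0, p1, p2, p3, p4, p5, p6, p7, p8, p9, p10, p11, p12, p13, p14, p15, show ((0:Fin 5):ℕ)=0 from rfl, show ((1:Fin 5):ℕ)=1 from rfl, show ((2:Fin 5):ℕ)=2 from rfl, show ((3:Fin 5):ℕ)=3 from rfl, show ((4:Fin 5):ℕ)=4 from rfl] at h31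
  norm_num at h31
  have h37 := horth 12 13 (by decide)
  simp only [prod55, ket5, pm5, applyMI5, Fintype.sum_prod_type, Fin.sum_univ_five, p0, p1, p2, p3, p4, p5, p6, p7, p8, p9, p10, p11, p12, p13, p14, p15, show ((0:Fin 5):ℕ)=0 from rfl, show ((1:Fin 5):ℕ)=1 from rfl, show ((2:Fin 5):ℕ)=2 from rfl, show ((3:Fin 5):ℕ)=3 from rfl, show ((4:Fin 5):ℕ)=4 from rfl] at h37
  norm_num at h37
  have h38 := horth 12 14 (by decide)
  simp only [prod55, ket5, pm5, applyMI5, Fintype.sum_prod_type, Fin.sum_univ_five, p0, p1, p2, p3, p4, p5, p6, p7, p8, p9, p10, p11, p12, p13, p14, p15, show ((0:Fin 5):ℕ)=0 from rfl, show ((1:Fin 5):ℕ)=1 from rfl, show ((2:Fin 5):ℕ)=2 from rfl, show ((3:Fin 5):ℕ)=3 from rfl, show ((4:Fin 5):ℕ)=4 from rfl] at h38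
  norm_num at h38
  have h47 := horth 14 15 (by decide)
  simp only [prod55, ket5, pm5, applyMI5, Fintype.sum_prod_type, Fin.sum_univ_five, p0, p1, p2, p3, p4, p5, p6, p7, p8, p9, p10, p11, p12, p13, p14, p15, show ((0:Fin 5):ℕ)=0 from rfl, show ((1:Fin 5):ℕ)=1 from rfl, show ((2:Fin 5):ℕ)=2 from rfl, show ((3:Fin 5):ℕ)=3 from rfl, show ((4:Fin 5):ℕ)=4 from rfl] at h47
  norm_num at h47
  have e00 : M 0 0 = M 4 4 := by linear_combination (-1/2) * h3 + (1/2) * h4 + (1/2) * h6 + (1/2) * h7 + (1/2) * h8 + (1/2) * h11 + (-1/4) * h16 + (1/4) * h17 + (1/2) * h18 + (1/2) * h19 + (-1/4) * h21 + (1/4) * h22 + (1/2) * h23 + (-1/2) * h24 + (-1/2) * h30 + (1/2) * h31 + (1) * h37 + (1) * h47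
  have e01 : M 0 1 = 0 := by linear_combination (1/2) * h3 + (1/2) * h4
  have e02 : M 0 2 = 0 := by linear_combination (1/2) * h3 + (-1/2) * h4
  have e03 : M 0 3 = 0 := by linear_combination (1/2) * h1 + (1/2) * h2
  have e04 : M 0 4 = 0 := by linear_combination (1/2) * h1 + (-1/2) * h2
  have e10 : M 1 0 = 0 := by linear_combination (1/2) * h3 + (1/2) * h4 + (1/2) * h6 + (-1/2) * h11
  have e11 : M 1 1 = M 4 4 := by linear_combination (-1/2) * h3 + (1/2) * h4 + (1/2) * h7 + (1/2) * h8 + (-1/4) * h16 + (1/4) * h17 + (1/2) * h18 + (1/2) * h19 + (-1/4) * h21 + (1/4) * h22 + (1/2) * h23 + (-1/2) * h24 + (-1/2) * h30 + (1/2) * h31 + (1) * h37 + (1) * h47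
  have e12 : M 1 2 = 0 := by linear_combination (-1/2) * h3 + (1/2) * h4 + (1/2) * h7 + (1/2) * h8
  have e13 : M 1 3 = 0 := by linear_combination (-1/2) * h1 + (-1/2) * h2 + (1/2) * h7 + (-1/2) * h8
  have e14 : M 1 4 = 0 := by linear_combination (-1/2) * h1 + (1/2) * h2 + (1) * h9
  have e20 : M 2 0 = 0 := by linear_combination (1/4) * h16 + (1/4) * h17 + (1/4) * h21 + (1/4) * h22
  have e21 : M 2 1 = 0 := by linear_combination (1/4) * h16 + (-1/4) * h17 + (1/4) * h21 + (-1/4) * h22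
  have e22 : M 2 2 = M 4 4 := by linear_combination (1/2) * h18 + (1/2) * h19 + (1/2) * h23 + (-1/2) * h24 + (-1/2) * h30 + (1/2) * h31 + (1) * h37
  have e23 : M 2 3 = 0 := by linear_combination (-1/4) * h16 + (1/4) * h17 + (-1/2) * h18 + (1/4) * h21 + (-1/4) * h22 + (1/2) * h23 + (1) * h26 + (-1) * h28 + (-1/2) * h30 + (-1/2) * h31 + (1) * h38
  have e24 : M 2 4 = 0 := by linear_combination (1/2) * h19 + (1/2) * h24
  have e30 : M 3 0 = 0 := by linear_combination (1/4) * h16 + (1/4) * h17 + (-1/4) * h21 + (-1/4) * h22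
  have e31 : M 3 1 = 0 := by linear_combination (1/4) * h16 + (-1/4) * h17 + (-1/4) * h21 + (1/4) * h22
  have e32 : M 3 2 = 0 := by linear_combination (-1/4) * h16 + (1/4) * h17 + (1/4) * h21 + (-1/4) * h22 + (1) * h26 + (-1) * h28 + (-1/2) * h30 + (-1/2) * h31 + (1) * h38
  have e33 : M 3 3 = M 4 4 := by linear_combination (1/2) * h19 + (-1/2) * h24 + (-1/2) * h30 + (1/2) * h31 + (1) * h37
  have e34 : M 3 4 = 0 := by linear_combination (1/2) * h19 + (-1/2) * h24
  have e40 : M 4 0 = 0 := by linear_combination (1) * h26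
  have e41 : M 4 1 = 0 := by linear_combination (-1) * h26 + (1) * h28
  have e42 : M 4 2 = 0 := by linear_combination (1/2) * h30 + (1/2) * h31
  have e43 : M 4 3 = 0 := by linear_combination (1/2) * h30 + (-1/2) * h31
  ext i j
  fin_cases i <;> fin_cases j <;> simp [Matrix.one_apply, e00, e01, e02, e03, e04, e10, e11, e12, e13, e14, e20, e21, e22, e23, e24, e30, e31, e32, e33, e34, e40, e41, e42, e43]
end

section
/- Let m = 2d₁+1 ≥ 3, n = 2d₂+1 ≥ 3. Let M = (a_{ij}) be an m×m complex matrix such that ⟨φ_s|(M ⊗ I_n)|φ_t⟩ = 0 whenever the states |φ_s⟩, |φ_t⟩ (s ≠ t) from the family of Eqs. (45) are orthogonal. Then M is a scalar multiple of the m×m identity matrix. -/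
/-- basis vector |k⟩ of ℂ^N -/
def ketN (N k : ℕ) : Fin N → ℂ := fun i => if (i : ℕ) = k then 1 else 0

/-- |k⟩ ± |l⟩ in ℂ^N (`s = true` is `+`, `s = false` is `-`) -/
def pmN (N k l : ℕ) (s : Bool) : Fin N → ℂ :=
  fun i => (if (i : ℕ) = k then 1 else 0) + (if s then 1 else -1) * (if (i : ℕ) = l then 1 else 0)

/-- product state a ⊗ b in ℂ^m ⊗ ℂ^n -/
def prodMN {m n : ℕ} (a : Fin m → ℂ) (b : Fin n → ℂ) : Fin m × Fin n → ℂ :=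
  fun p => a p.1 * b p.2

/-- index set for the 2(m+n)−4 = 4d₁+4d₂ states of Eqs. (45) -/
abbrev Idx45 (d₁ d₂ : ℕ) :=
  (Fin d₂ × Bool) ⊕ (Fin d₁ × Bool) ⊕ (Fin d₂ × Bool) ⊕ (Fin d₁ × Bool)

/-- the states of Eqs. (45) in ℂ^m ⊗ ℂ^n with m = 2d₁+1, n = 2d₂+1 -/
def psi45 (d₁ d₂ : ℕ) : Idx45 d₁ d₂ → (Fin (2*d₁+1) × Fin (2*d₂+1) → ℂ)
  | .inl (δ, s) => prodMN (ketN (2*d₁+1) 0) (pmN (2*d₂+1) (2*δ) (2*δ+1) s)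
  | .inr (.inl (σ, s)) => prodMN (pmN (2*d₁+1) (2*σ) (2*σ+1) s) (ketN (2*d₂+1) (2*d₂))
  | .inr (.inr (.inl (δ, s))) => prodMN (ketN (2*d₁+1) (2*d₁)) (pmN (2*d₂+1) (2*δ+1) (2*δ+2) s)
  | .inr (.inr (.inr (σ, s))) => prodMN (pmN (2*d₁+1) (2*σ+1) (2*σ+2) s) (ketN (2*d₂+1) 0)

/-- (M ⊗ I_n) applied to a vector of ℂ^m ⊗ ℂ^n -/
noncomputable def applyMI {m n : ℕ} (M : Matrix (Fin m) (Fin m) ℂ)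
    (x : Fin m × Fin n → ℂ) : Fin m × Fin n → ℂ :=
  fun p => ∑ k : Fin m, M p.1 k * x (k, p.2)

def sgn (s : Bool) : ℂ := if s then 1 else -1

lemma conj_sgn (s : Bool) : (starRingEnd ℂ) (sgn s) = sgn s := by
  cases s <;> simp [sgn]

lemma sgn_true : sgn true = 1 := rfl
lemma sgn_false : sgn false = -1 := rfl

lemma pmN_eq (N k l : ℕ) (s : Bool) :
    pmN N k l s = fun i => ketN N k i + sgn s * ketN N l i := rfl

noncomputable def vsum {N : ℕ} (x y : Fin N → ℂ) : ℂ :=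
  ∑ i, (starRingEnd ℂ) (x i) * y i

noncomputable def msum {m : ℕ} (M : Matrix (Fin m) (Fin m) ℂ) (x y : Fin m → ℂ) : ℂ :=
  ∑ i, ∑ k, (starRingEnd ℂ) (x i) * (M i k * y k)

lemma inner_eq {m n : ℕ} (a a' : Fin m → ℂ) (b b' : Fin n → ℂ) :
    ∑ p : Fin m × Fin n, (starRingEnd ℂ) (prodMN a b p) * prodMN a' b' p
      = vsum a a' * vsum b b' := by
  rw [Fintype.sum_prod_type, vsum, vsum, Finset.sum_mul_sum]
  refine Finset.sum_congr rfl fun i _ => Finset.sum_congr rfl fun j _ => ?_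
  simp only [prodMN, map_mul]; ring

lemma minner_eq {m n : ℕ} (M : Matrix (Fin m) (Fin m) ℂ) (a a' : Fin m → ℂ) (b b' : Fin n → ℂ) :
    ∑ p : Fin m × Fin n, (starRingEnd ℂ) (prodMN a b p) * applyMI M (prodMN a' b') p
      = msum M a a' * vsum b b' := by
  rw [Fintype.sum_prod_type, msum, vsum, Finset.sum_mul_sum]
  refine Finset.sum_congr rfl fun i _ => Finset.sum_congr rfl fun j _ => ?_
  simp only [prodMN, applyMI, map_mul, Finset.sum_mul, Finset.mul_sum]
  refine Finset.sum_congr rfl fun k _ => ?_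
  ring

lemma vsum_ket_ket {N k l : ℕ} (hk : k < N) (hl : l < N) :
    vsum (ketN N k) (ketN N l) = if k = l then 1 else 0 := by
  unfold vsum ketN
  rw [Finset.sum_eq_single ⟨k, hk⟩]
  · simp
  · intro i _ hne
    have : (i : ℕ) ≠ k := fun h => hne (Fin.ext h)
    simp [this]
  · simp

lemma msum_ket_ket {m k l : ℕ} (M : Matrix (Fin m) (Fin m) ℂ) (hk : k < m) (hl : l < m) :
    msum M (ketN m k) (ketN m l) = M ⟨k, hk⟩ ⟨l, hl⟩ := by
  unfold msum ketN
  rw [Finset.sum_eq_single ⟨k, hk⟩]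
  · rw [Finset.sum_eq_single ⟨l, hl⟩]
    · simp
    · intro i _ hne
      have : (i : ℕ) ≠ l := fun h => hne (Fin.ext h)
      simp [this]
    · simp
  · intro i _ hne
    have : (i : ℕ) ≠ k := fun h => hne (Fin.ext h)
    simp [this]
  · simp

lemma vsum_add_right {N : ℕ} (x y z : Fin N → ℂ) :
    vsum x (fun i => y i + z i) = vsum x y + vsum x z := by
  simp [vsum, mul_add, Finset.sum_add_distrib]

lemma vsum_smul_right {N : ℕ} (x y : Fin N → ℂ) (c : ℂ) :
    vsum x (fun i => c * y i) = c * vsum x y := by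
  simp only [vsum, Finset.mul_sum]
  exact Finset.sum_congr rfl fun i _ => by ring

lemma vsum_add_left {N : ℕ} (x y z : Fin N → ℂ) :
    vsum (fun i => x i + y i) z = vsum x z + vsum y z := by
  simp [vsum, map_add, add_mul, Finset.sum_add_distrib]

lemma vsum_smul_left {N : ℕ} (x y : Fin N → ℂ) (c : ℂ) :
    vsum (fun i => c * x i) y = (starRingEnd ℂ) c * vsum x y := by
  simp only [vsum, map_mul, Finset.mul_sum]
  exact Finset.sum_congr rfl fun i _ => by ring

lemma msum_add_right {m : ℕ} (M : Matrix (Fin m) (Fin m) ℂ) (x y z : Fin m → ℂ) :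
    msum M x (fun i => y i + z i) = msum M x y + msum M x z := by
  simp [msum, mul_add, Finset.sum_add_distrib]

lemma msum_smul_right {m : ℕ} (M : Matrix (Fin m) (Fin m) ℂ) (x y : Fin m → ℂ) (c : ℂ) :
    msum M x (fun i => c * y i) = c * msum M x y := by
  simp only [msum, Finset.mul_sum]
  exact Finset.sum_congr rfl fun i _ => Finset.sum_congr rfl fun k _ => by ring

lemma msum_add_left {m : ℕ} (M : Matrix (Fin m) (Fin m) ℂ) (x y z : Fin m → ℂ) :
    msum M (fun i => x i + y i) z = msum M x z + msum M y z := by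
  simp [msum, map_add, add_mul, Finset.sum_add_distrib]

lemma msum_smul_left {m : ℕ} (M : Matrix (Fin m) (Fin m) ℂ) (x y : Fin m → ℂ) (c : ℂ) :
    msum M (fun i => c * x i) y = (starRingEnd ℂ) c * msum M x y := by
  simp only [msum, map_mul, Finset.mul_sum]
  exact Finset.sum_congr rfl fun i _ => Finset.sum_congr rfl fun k _ => by ring

lemma vsum_ket_pm {N j k l : ℕ} (hj : j < N) (hk : k < N) (hl : l < N) (s : Bool) :
    vsum (ketN N j) (pmN N k l s)
      = (if j = k then 1 else 0) + sgn s * (if j = l then 1 else 0) := by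
  rw [pmN_eq, vsum_add_right, vsum_smul_right, vsum_ket_ket hj hk, vsum_ket_ket hj hl]

lemma vsum_pm_ket {N j k l : ℕ} (hj : j < N) (hk : k < N) (hl : l < N) (s : Bool) :
    vsum (pmN N k l s) (ketN N j)
      = (if k = j then 1 else 0) + sgn s * (if l = j then 1 else 0) := by
  rw [pmN_eq, vsum_add_left, vsum_smul_left, conj_sgn, vsum_ket_ket hk hj, vsum_ket_ket hl hj]

lemma vsum_pm_pm {N k l k' l' : ℕ} (hk : k < N) (hl : l < N) (hk' : k' < N) (hl' : l' < N)
    (s s' : Bool) :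
    vsum (pmN N k l s) (pmN N k' l' s')
      = ((if k = k' then 1 else 0) + sgn s' * (if k = l' then 1 else 0))
        + sgn s * ((if l = k' then 1 else 0) + sgn s' * (if l = l' then 1 else 0)) := by
  rw [pmN_eq, vsum_add_left, vsum_smul_left, conj_sgn, vsum_ket_pm hk hk' hl' s',
    vsum_ket_pm hl hk' hl' s']

lemma msum_ket_pm {m j k l : ℕ} (M : Matrix (Fin m) (Fin m) ℂ)
    (hj : j < m) (hk : k < m) (hl : l < m) (s : Bool) :
    msum M (ketN m j) (pmN m k l s) = M ⟨j, hj⟩ ⟨k, hk⟩ + sgn s * M ⟨j, hj⟩ ⟨l, hl⟩ := by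
  rw [pmN_eq, msum_add_right, msum_smul_right, msum_ket_ket M hj hk, msum_ket_ket M hj hl]

lemma msum_pm_ket {m j k l : ℕ} (M : Matrix (Fin m) (Fin m) ℂ)
    (hj : j < m) (hk : k < m) (hl : l < m) (s : Bool) :
    msum M (pmN m k l s) (ketN m j) = M ⟨k, hk⟩ ⟨j, hj⟩ + sgn s * M ⟨l, hl⟩ ⟨j, hj⟩ := by
  rw [pmN_eq, msum_add_left, msum_smul_left, conj_sgn, msum_ket_ket M hk hj, msum_ket_ket M hl hj]

lemma msum_pm_pm {m k l k' l' : ℕ} (M : Matrix (Fin m) (Fin m) ℂ)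
    (hk : k < m) (hl : l < m) (hk' : k' < m) (hl' : l' < m) (s s' : Bool) :
    msum M (pmN m k l s) (pmN m k' l' s')
      = (M ⟨k, hk⟩ ⟨k', hk'⟩ + sgn s' * M ⟨k, hk⟩ ⟨l', hl'⟩)
        + sgn s * (M ⟨l, hl⟩ ⟨k', hk'⟩ + sgn s' * M ⟨l, hl⟩ ⟨l', hl'⟩) := by
  rw [pmN_eq, msum_add_left, msum_smul_left, conj_sgn, msum_ket_pm M hk hk' hl' s',
    msum_ket_pm M hl hk' hl' s']

/-- first tensor factor of the states -/
def aPart (d₁ d₂ : ℕ) : Idx45 d₁ d₂ → (Fin (2*d₁+1) → ℂ)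
  | .inl _ => ketN (2*d₁+1) 0
  | .inr (.inl (σ, s)) => pmN (2*d₁+1) (2*σ) (2*σ+1) s
  | .inr (.inr (.inl _)) => ketN (2*d₁+1) (2*d₁)
  | .inr (.inr (.inr (σ, s))) => pmN (2*d₁+1) (2*σ+1) (2*σ+2) s

/-- second tensor factor of the states -/
def bPart (d₁ d₂ : ℕ) : Idx45 d₁ d₂ → (Fin (2*d₂+1) → ℂ)
  | .inl (δ, s) => pmN (2*d₂+1) (2*δ) (2*δ+1) s
  | .inr (.inl _) => ketN (2*d₂+1) (2*d₂)
  | .inr (.inr (.inl (δ, s))) => pmN (2*d₂+1) (2*δ+1) (2*δ+2) s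
  | .inr (.inr (.inr _)) => ketN (2*d₂+1) 0

lemma psi45_split (d₁ d₂ : ℕ) (i : Idx45 d₁ d₂) :
    psi45 d₁ d₂ i = prodMN (aPart d₁ d₂ i) (bPart d₁ d₂ i) := by
  rcases i with ⟨δ, s⟩ | ⟨σ, s⟩ | ⟨δ, s⟩ | ⟨σ, s⟩ <;> rfl

theorem povm_trivial_odd (d₁ d₂ : ℕ) (hd₁ : 1 ≤ d₁) (hd₂ : 1 ≤ d₂)
    (M : Matrix (Fin (2*d₁+1)) (Fin (2*d₁+1)) ℂ)
    (horth : ∀ s t : Idx45 d₁ d₂, s ≠ t →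
      (∑ p : Fin (2*d₁+1) × Fin (2*d₂+1),
        (starRingEnd ℂ) (psi45 d₁ d₂ s p) * psi45 d₁ d₂ t p = 0) →
      ∑ p : Fin (2*d₁+1) × Fin (2*d₂+1),
        (starRingEnd ℂ) (psi45 d₁ d₂ s p) * applyMI M (psi45 d₁ d₂ t) p = 0) :
    ∃ c : ℂ, M = c • (1 : Matrix (Fin (2*d₁+1)) (Fin (2*d₁+1)) ℂ) := by
  have key : ∀ s t : Idx45 d₁ d₂, s ≠ t →
      vsum (aPart d₁ d₂ s) (aPart d₁ d₂ t) = 0 →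
      vsum (bPart d₁ d₂ s) (bPart d₁ d₂ t) ≠ 0 →
      msum M (aPart d₁ d₂ s) (aPart d₁ d₂ t) = 0 := by
    intro s t hst ha hb
    have h := horth s t hst (by
      simp only [psi45_split, inner_eq, ha, zero_mul])
    simp only [psi45_split, minner_eq] at h
    exact (mul_eq_zero.1 h).resolve_right hb
  -- (A) row 0 : pairs from class 1 (δ=0) against class 4
  have hA : ∀ σ (hσ : σ < d₁) (sg : Bool) (p0 : 0 < 2*d₁+1)
      (p1 : 2*σ+1 < 2*d₁+1) (p2 : 2*σ+2 < 2*d₁+1),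
      M ⟨0, p0⟩ ⟨2*σ+1, p1⟩ + sgn sg * M ⟨0, p0⟩ ⟨2*σ+2, p2⟩ = 0 := by
    intro σ hσ sg p0 p1 p2
    have h := key (.inl (⟨0, hd₂⟩, true)) (.inr (.inr (.inr (⟨σ, hσ⟩, sg))))
      (by simp) ?_ ?_
    · rw [show aPart d₁ d₂ (.inl (⟨0, hd₂⟩, true)) = ketN (2*d₁+1) 0 from rfl,
        show aPart d₁ d₂ (.inr (.inr (.inr (⟨σ, hσ⟩, sg)))) = pmN (2*d₁+1) (2*σ+1) (2*σ+2) sg from rfl,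
        msum_ket_pm M p0 p1 p2] at h
      exact h
    · rw [show aPart d₁ d₂ (.inl (⟨0, hd₂⟩, true)) = ketN (2*d₁+1) 0 from rfl,
        show aPart d₁ d₂ (.inr (.inr (.inr (⟨σ, hσ⟩, sg)))) = pmN (2*d₁+1) (2*σ+1) (2*σ+2) sg from rfl,
        vsum_ket_pm p0 p1 p2]
      rw [if_neg (by omega : ¬(0:ℕ) = 2*σ+1), if_neg (by omega : ¬(0:ℕ) = 2*σ+2)]
      ring
    · rw [show bPart d₁ d₂ (.inl (⟨0, hd₂⟩, true)) = pmN (2*d₂+1) (2*0) (2*0+1) true from rfl,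
        show bPart d₁ d₂ (.inr (.inr (.inr (⟨σ, hσ⟩, sg)))) = ketN (2*d₂+1) 0 from rfl,
        vsum_pm_ket (by omega) (by omega) (by omega)]
      rw [if_pos (by omega : (2*0:ℕ) = 0), if_neg (by omega : (2*0+1:ℕ) ≠ 0)]
      norm_num [sgn]
  -- (A') column 0
  have hA' : ∀ σ (hσ : σ < d₁) (sg : Bool) (p0 : 0 < 2*d₁+1)
      (p1 : 2*σ+1 < 2*d₁+1) (p2 : 2*σ+2 < 2*d₁+1),
      M ⟨2*σ+1, p1⟩ ⟨0, p0⟩ + sgn sg * M ⟨2*σ+2, p2⟩ ⟨0, p0⟩ = 0 := by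
    intro σ hσ sg p0 p1 p2
    have h := key (.inr (.inr (.inr (⟨σ, hσ⟩, sg)))) (.inl (⟨0, hd₂⟩, true))
      (by simp) ?_ ?_
    · rw [show aPart d₁ d₂ (.inl (⟨0, hd₂⟩, true)) = ketN (2*d₁+1) 0 from rfl,
        show aPart d₁ d₂ (.inr (.inr (.inr (⟨σ, hσ⟩, sg)))) = pmN (2*d₁+1) (2*σ+1) (2*σ+2) sg from rfl,
        msum_pm_ket M p0 p1 p2] at h
      exact h
    · rw [show aPart d₁ d₂ (.inl (⟨0, hd₂⟩, true)) = ketN (2*d₁+1) 0 from rfl,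
        show aPart d₁ d₂ (.inr (.inr (.inr (⟨σ, hσ⟩, sg)))) = pmN (2*d₁+1) (2*σ+1) (2*σ+2) sg from rfl,
        vsum_pm_ket p0 p1 p2]
      rw [if_neg (by omega : ¬(2*σ+1:ℕ) = 0), if_neg (by omega : ¬(2*σ+2:ℕ) = 0)]
      ring
    · rw [show bPart d₁ d₂ (.inl (⟨0, hd₂⟩, true)) = pmN (2*d₂+1) (2*0) (2*0+1) true from rfl,
        show bPart d₁ d₂ (.inr (.inr (.inr (⟨σ, hσ⟩, sg)))) = ketN (2*d₂+1) 0 from rfl,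
        vsum_ket_pm (by omega) (by omega) (by omega)]
      rw [if_pos (by omega : (0:ℕ) = 2*0), if_neg (by omega : (0:ℕ) ≠ 2*0+1)]
      norm_num [sgn]
  -- (B) row 2d₁ : class 3 (δ = d₂-1) against class 2
  have hB : ∀ σ (hσ : σ < d₁) (sg : Bool) (pt : 2*d₁ < 2*d₁+1)
      (p1 : 2*σ < 2*d₁+1) (p2 : 2*σ+1 < 2*d₁+1),
      M ⟨2*d₁, pt⟩ ⟨2*σ, p1⟩ + sgn sg * M ⟨2*d₁, pt⟩ ⟨2*σ+1, p2⟩ = 0 := by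
    intro σ hσ sg pt p1 p2
    have h := key (.inr (.inr (.inl (⟨d₂-1, by omega⟩, true)))) (.inr (.inl (⟨σ, hσ⟩, sg)))
      (by simp) ?_ ?_
    · rw [show aPart d₁ d₂ (.inr (.inr (.inl (⟨d₂-1, by omega⟩, true)))) = ketN (2*d₁+1) (2*d₁) from rfl,
        show aPart d₁ d₂ (.inr (.inl (⟨σ, hσ⟩, sg))) = pmN (2*d₁+1) (2*σ) (2*σ+1) sg from rfl,
        msum_ket_pm M pt p1 p2] at h
      exact h
    · rw [show aPart d₁ d₂ (.inr (.inr (.inl (⟨d₂-1, by omega⟩, true)))) = ketN (2*d₁+1) (2*d₁) from rfl,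
        show aPart d₁ d₂ (.inr (.inl (⟨σ, hσ⟩, sg))) = pmN (2*d₁+1) (2*σ) (2*σ+1) sg from rfl,
        vsum_ket_pm pt p1 p2]
      rw [if_neg (by omega : ¬(2*d₁:ℕ) = 2*σ), if_neg (by omega : ¬(2*d₁:ℕ) = 2*σ+1)]
      ring
    · rw [show bPart d₁ d₂ (.inr (.inr (.inl (⟨d₂-1, by omega⟩, true)))) = pmN (2*d₂+1) (2*(d₂-1)+1) (2*(d₂-1)+2) true from rfl,
        show bPart d₁ d₂ (.inr (.inl (⟨σ, hσ⟩, sg))) = ketN (2*d₂+1) (2*d₂) from rfl,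
        vsum_pm_ket (by omega) (by omega) (by omega)]
      rw [if_neg (by omega : ¬(2*(d₂-1)+1:ℕ) = 2*d₂), if_pos (by omega : (2*(d₂-1)+2:ℕ) = 2*d₂)]
      norm_num [sgn]
  -- (B') column 2d₁
  have hB' : ∀ σ (hσ : σ < d₁) (sg : Bool) (pt : 2*d₁ < 2*d₁+1)
      (p1 : 2*σ < 2*d₁+1) (p2 : 2*σ+1 < 2*d₁+1),
      M ⟨2*σ, p1⟩ ⟨2*d₁, pt⟩ + sgn sg * M ⟨2*σ+1, p2⟩ ⟨2*d₁, pt⟩ = 0 := by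
    intro σ hσ sg pt p1 p2
    have h := key (.inr (.inl (⟨σ, hσ⟩, sg))) (.inr (.inr (.inl (⟨d₂-1, by omega⟩, true))))
      (by simp) ?_ ?_
    · rw [show aPart d₁ d₂ (.inr (.inr (.inl (⟨d₂-1, by omega⟩, true)))) = ketN (2*d₁+1) (2*d₁) from rfl,
        show aPart d₁ d₂ (.inr (.inl (⟨σ, hσ⟩, sg))) = pmN (2*d₁+1) (2*σ) (2*σ+1) sg from rfl,
        msum_pm_ket M pt p1 p2] at h
      exact h
    · rw [show aPart d₁ d₂ (.inr (.inr (.inl (⟨d₂-1, by omega⟩, true)))) = ketN (2*d₁+1) (2*d₁) from rfl,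
        show aPart d₁ d₂ (.inr (.inl (⟨σ, hσ⟩, sg))) = pmN (2*d₁+1) (2*σ) (2*σ+1) sg from rfl,
        vsum_pm_ket pt p1 p2]
      rw [if_neg (by omega : ¬(2*σ:ℕ) = 2*d₁), if_neg (by omega : ¬(2*σ+1:ℕ) = 2*d₁)]
      ring
    · rw [show bPart d₁ d₂ (.inr (.inr (.inl (⟨d₂-1, by omega⟩, true)))) = pmN (2*d₂+1) (2*(d₂-1)+1) (2*(d₂-1)+2) true from rfl,
        show bPart d₁ d₂ (.inr (.inl (⟨σ, hσ⟩, sg))) = ketN (2*d₂+1) (2*d₂) from rfl,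
        vsum_ket_pm (by omega) (by omega) (by omega)]
      rw [if_neg (by omega : ¬(2*d₂:ℕ) = 2*(d₂-1)+1), if_pos (by omega : (2*d₂:ℕ) = 2*(d₂-1)+2)]
      norm_num [sgn]
  -- (C) class 2 vs class 2
  have hC : ∀ σ τ (hσ : σ < d₁) (hτ : τ < d₁) (sg sg' : Bool), (σ ≠ τ ∨ sg ≠ sg') →
      ∀ (q1 : 2*σ < 2*d₁+1) (q2 : 2*σ+1 < 2*d₁+1) (q3 : 2*τ < 2*d₁+1) (q4 : 2*τ+1 < 2*d₁+1),
      (M ⟨2*σ, q1⟩ ⟨2*τ, q3⟩ + sgn sg' * M ⟨2*σ, q1⟩ ⟨2*τ+1, q4⟩)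
        + sgn sg * (M ⟨2*σ+1, q2⟩ ⟨2*τ, q3⟩ + sgn sg' * M ⟨2*σ+1, q2⟩ ⟨2*τ+1, q4⟩) = 0 := by
    intro σ τ hσ hτ sg sg' hne q1 q2 q3 q4
    have h := key (.inr (.inl (⟨σ, hσ⟩, sg))) (.inr (.inl (⟨τ, hτ⟩, sg')))
      (by
        simp only [ne_eq, Sum.inr.injEq, Sum.inl.injEq, Prod.mk.injEq, Fin.mk.injEq, not_and]
        intro h1 h2
        rcases hne with h | h
        · exact h h1
        · exact h h2) ?_ ?_
    · rw [show aPart d₁ d₂ (.inr (.inl (⟨σ, hσ⟩, sg))) = pmN (2*d₁+1) (2*σ) (2*σ+1) sg from rfl,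
        show aPart d₁ d₂ (.inr (.inl (⟨τ, hτ⟩, sg'))) = pmN (2*d₁+1) (2*τ) (2*τ+1) sg' from rfl,
        msum_pm_pm M q1 q2 q3 q4] at h
      exact h
    · rw [show aPart d₁ d₂ (.inr (.inl (⟨σ, hσ⟩, sg))) = pmN (2*d₁+1) (2*σ) (2*σ+1) sg from rfl,
        show aPart d₁ d₂ (.inr (.inl (⟨τ, hτ⟩, sg'))) = pmN (2*d₁+1) (2*τ) (2*τ+1) sg' from rfl,
        vsum_pm_pm q1 q2 q3 q4]
      by_cases hστ : σ = τ
      · subst hστ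
        have hsg : sg ≠ sg' := by tauto
        rw [if_pos (rfl : (2*σ:ℕ) = 2*σ), if_neg (by omega : ¬(2*σ:ℕ) = 2*σ+1),
          if_neg (by omega : ¬(2*σ+1:ℕ) = 2*σ), if_pos (rfl : (2*σ+1:ℕ) = 2*σ+1)]
        rcases sg <;> rcases sg' <;> first | exact absurd rfl hsg | norm_num [sgn]
      · rw [if_neg (by omega : ¬(2*σ:ℕ) = 2*τ), if_neg (by omega : ¬(2*σ:ℕ) = 2*τ+1),
          if_neg (by omega : ¬(2*σ+1:ℕ) = 2*τ), if_neg (by omega : ¬(2*σ+1:ℕ) = 2*τ+1)]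
        ring
    · rw [show bPart d₁ d₂ (.inr (.inl (⟨σ, hσ⟩, sg))) = ketN (2*d₂+1) (2*d₂) from rfl,
        show bPart d₁ d₂ (.inr (.inl (⟨τ, hτ⟩, sg'))) = ketN (2*d₂+1) (2*d₂) from rfl,
        vsum_ket_ket (by omega) (by omega)]
      norm_num
  -- (D) class 4 vs class 4
  have hD : ∀ σ τ (hσ : σ < d₁) (hτ : τ < d₁) (sg sg' : Bool), (σ ≠ τ ∨ sg ≠ sg') →
      ∀ (q1 : 2*σ+1 < 2*d₁+1) (q2 : 2*σ+2 < 2*d₁+1) (q3 : 2*τ+1 < 2*d₁+1) (q4 : 2*τ+2 < 2*d₁+1),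
      (M ⟨2*σ+1, q1⟩ ⟨2*τ+1, q3⟩ + sgn sg' * M ⟨2*σ+1, q1⟩ ⟨2*τ+2, q4⟩)
        + sgn sg * (M ⟨2*σ+2, q2⟩ ⟨2*τ+1, q3⟩ + sgn sg' * M ⟨2*σ+2, q2⟩ ⟨2*τ+2, q4⟩) = 0 := by
    intro σ τ hσ hτ sg sg' hne q1 q2 q3 q4
    have h := key (.inr (.inr (.inr (⟨σ, hσ⟩, sg)))) (.inr (.inr (.inr (⟨τ, hτ⟩, sg'))))
      (by
        simp only [ne_eq, Sum.inr.injEq, Prod.mk.injEq, Fin.mk.injEq, not_and]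
        intro h1 h2
        rcases hne with h | h
        · exact h h1
        · exact h h2) ?_ ?_
    · rw [show aPart d₁ d₂ (.inr (.inr (.inr (⟨σ, hσ⟩, sg)))) = pmN (2*d₁+1) (2*σ+1) (2*σ+2) sg from rfl,
        show aPart d₁ d₂ (.inr (.inr (.inr (⟨τ, hτ⟩, sg')))) = pmN (2*d₁+1) (2*τ+1) (2*τ+2) sg' from rfl,
        msum_pm_pm M q1 q2 q3 q4] at h
      exact h
    · rw [show aPart d₁ d₂ (.inr (.inr (.inr (⟨σ, hσ⟩, sg)))) = pmN (2*d₁+1) (2*σ+1) (2*σ+2) sg from rfl,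
        show aPart d₁ d₂ (.inr (.inr (.inr (⟨τ, hτ⟩, sg')))) = pmN (2*d₁+1) (2*τ+1) (2*τ+2) sg' from rfl,
        vsum_pm_pm q1 q2 q3 q4]
      by_cases hστ : σ = τ
      · subst hστ
        have hsg : sg ≠ sg' := by tauto
        rw [if_pos (rfl : (2*σ+1:ℕ) = 2*σ+1), if_neg (by omega : ¬(2*σ+1:ℕ) = 2*σ+2),
          if_neg (by omega : ¬(2*σ+2:ℕ) = 2*σ+1), if_pos (rfl : (2*σ+2:ℕ) = 2*σ+2)]
        rcases sg <;> rcases sg' <;> first | exact absurd rfl hsg | norm_num [sgn]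
      · rw [if_neg (by omega : ¬(2*σ+1:ℕ) = 2*τ+1), if_neg (by omega : ¬(2*σ+1:ℕ) = 2*τ+2),
          if_neg (by omega : ¬(2*σ+2:ℕ) = 2*τ+1), if_neg (by omega : ¬(2*σ+2:ℕ) = 2*τ+2)]
        ring
    · rw [show bPart d₁ d₂ (.inr (.inr (.inr (⟨σ, hσ⟩, sg)))) = ketN (2*d₂+1) 0 from rfl,
        show bPart d₁ d₂ (.inr (.inr (.inr (⟨τ, hτ⟩, sg')))) = ketN (2*d₂+1) 0 from rfl,
        vsum_ket_ket (by omega) (by omega)]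
      norm_num
  -- entrywise consequences
  have hRow0 : ∀ b, 1 ≤ b → ∀ (hb : b < 2*d₁+1) (p0 : 0 < 2*d₁+1), M ⟨0, p0⟩ ⟨b, hb⟩ = 0 := by
    intro b hb1 hb p0
    obtain ⟨σ, rfl | rfl⟩ : ∃ σ, b = 2*σ+1 ∨ b = 2*σ+2 := ⟨(b-1)/2, by omega⟩
    · have h1 := hA σ (by omega) true p0 (by omega) (by omega)
      have h2 := hA σ (by omega) false p0 (by omega) (by omega)
      rw [sgn_true] at h1; rw [sgn_false] at h2
      linear_combination (h1 + h2) / 2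
    · have h1 := hA σ (by omega) true p0 (by omega) (by omega)
      have h2 := hA σ (by omega) false p0 (by omega) (by omega)
      rw [sgn_true] at h1; rw [sgn_false] at h2
      linear_combination (h1 - h2) / 2
  have hCol0 : ∀ b, 1 ≤ b → ∀ (hb : b < 2*d₁+1) (p0 : 0 < 2*d₁+1), M ⟨b, hb⟩ ⟨0, p0⟩ = 0 := by
    intro b hb1 hb p0
    obtain ⟨σ, rfl | rfl⟩ : ∃ σ, b = 2*σ+1 ∨ b = 2*σ+2 := ⟨(b-1)/2, by omega⟩
    · have h1 := hA' σ (by omega) true p0 (by omega) (by omega)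
      have h2 := hA' σ (by omega) false p0 (by omega) (by omega)
      rw [sgn_true] at h1; rw [sgn_false] at h2
      linear_combination (h1 + h2) / 2
    · have h1 := hA' σ (by omega) true p0 (by omega) (by omega)
      have h2 := hA' σ (by omega) false p0 (by omega) (by omega)
      rw [sgn_true] at h1; rw [sgn_false] at h2
      linear_combination (h1 - h2) / 2
  have hRowT : ∀ b, b < 2*d₁ → ∀ (pt : 2*d₁ < 2*d₁+1) (pb : b < 2*d₁+1),
      M ⟨2*d₁, pt⟩ ⟨b, pb⟩ = 0 := by
    intro b hb pt pb
    obtain ⟨σ, rfl | rfl⟩ : ∃ σ, b = 2*σ ∨ b = 2*σ+1 := ⟨b/2, by omega⟩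
    · have h1 := hB σ (by omega) true pt (by omega) (by omega)
      have h2 := hB σ (by omega) false pt (by omega) (by omega)
      rw [sgn_true] at h1; rw [sgn_false] at h2
      linear_combination (h1 + h2) / 2
    · have h1 := hB σ (by omega) true pt (by omega) (by omega)
      have h2 := hB σ (by omega) false pt (by omega) (by omega)
      rw [sgn_true] at h1; rw [sgn_false] at h2
      linear_combination (h1 - h2) / 2
  have hColT : ∀ b, b < 2*d₁ → ∀ (pt : 2*d₁ < 2*d₁+1) (pb : b < 2*d₁+1),
      M ⟨b, pb⟩ ⟨2*d₁, pt⟩ = 0 := by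
    intro b hb pt pb
    obtain ⟨σ, rfl | rfl⟩ : ∃ σ, b = 2*σ ∨ b = 2*σ+1 := ⟨b/2, by omega⟩
    · have h1 := hB' σ (by omega) true pt (by omega) (by omega)
      have h2 := hB' σ (by omega) false pt (by omega) (by omega)
      rw [sgn_true] at h1; rw [sgn_false] at h2
      linear_combination (h1 + h2) / 2
    · have h1 := hB' σ (by omega) true pt (by omega) (by omega)
      have h2 := hB' σ (by omega) false pt (by omega) (by omega)
      rw [sgn_true] at h1; rw [sgn_false] at h2
      linear_combination (h1 - h2) / 2
  have hOffC : ∀ σ τ, σ < d₁ → τ < d₁ → σ ≠ τ → ∀ a b (pa : a < 2*d₁+1) (pb : b < 2*d₁+1),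
      (a = 2*σ ∨ a = 2*σ+1) → (b = 2*τ ∨ b = 2*τ+1) → M ⟨a, pa⟩ ⟨b, pb⟩ = 0 := by
    intro σ τ hσ hτ hne a b pa pb ha hb
    have htt := hC σ τ hσ hτ true true (Or.inl hne) (by omega) (by omega) (by omega) (by omega)
    have htf := hC σ τ hσ hτ true false (Or.inl hne) (by omega) (by omega) (by omega) (by omega)
    have hft := hC σ τ hσ hτ false true (Or.inl hne) (by omega) (by omega) (by omega) (by omega)
    have hff := hC σ τ hσ hτ false false (Or.inl hne) (by omega) (by omega) (by omega) (by omega)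
    rw [sgn_true] at htt htf hft
    rw [sgn_false] at htf hft hff
    rcases ha with rfl | rfl <;> rcases hb with rfl | rfl
    · linear_combination (htt + htf + hft + hff) / 4
    · linear_combination (htt - htf + hft - hff) / 4
    · linear_combination (htt + htf - hft - hff) / 4
    · linear_combination (htt - htf - hft + hff) / 4
  have hOffD : ∀ σ τ, σ < d₁ → τ < d₁ → σ ≠ τ → ∀ a b (pa : a < 2*d₁+1) (pb : b < 2*d₁+1),
      (a = 2*σ+1 ∨ a = 2*σ+2) → (b = 2*τ+1 ∨ b = 2*τ+2) → M ⟨a, pa⟩ ⟨b, pb⟩ = 0 := by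
    intro σ τ hσ hτ hne a b pa pb ha hb
    have htt := hD σ τ hσ hτ true true (Or.inl hne) (by omega) (by omega) (by omega) (by omega)
    have htf := hD σ τ hσ hτ true false (Or.inl hne) (by omega) (by omega) (by omega) (by omega)
    have hft := hD σ τ hσ hτ false true (Or.inl hne) (by omega) (by omega) (by omega) (by omega)
    have hff := hD σ τ hσ hτ false false (Or.inl hne) (by omega) (by omega) (by omega) (by omega)
    rw [sgn_true] at htt htf hft
    rw [sgn_false] at htf hft hff
    rcases ha with rfl | rfl <;> rcases hb with rfl | rfl
    · linear_combination (htt + htf + hft + hff) / 4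
    · linear_combination (htt - htf + hft - hff) / 4
    · linear_combination (htt + htf - hft - hff) / 4
    · linear_combination (htt - htf - hft + hff) / 4
  have hStep : ∀ k, k < 2*d₁ → ∀ (p1 : k < 2*d₁+1) (p2 : k+1 < 2*d₁+1),
      M ⟨k, p1⟩ ⟨k, p1⟩ = M ⟨k+1, p2⟩ ⟨k+1, p2⟩ := by
    intro k hk p1 p2
    obtain ⟨σ, rfl | rfl⟩ : ∃ σ, k = 2*σ ∨ k = 2*σ+1 := ⟨k/2, by omega⟩
    · have h1 := hC σ σ (by omega) (by omega) true false (Or.inr (by simp))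
        (by omega) (by omega) (by omega) (by omega)
      have h2 := hC σ σ (by omega) (by omega) false true (Or.inr (by simp))
        (by omega) (by omega) (by omega) (by omega)
      rw [sgn_true, sgn_false] at h1 h2
      linear_combination (h1 + h2) / 2
    · have h1 := hD σ σ (by omega) (by omega) true false (Or.inr (by simp))
        (by omega) (by omega) (by omega) (by omega)
      have h2 := hD σ σ (by omega) (by omega) false true (Or.inr (by simp))
        (by omega) (by omega) (by omega) (by omega)
      rw [sgn_true, sgn_false] at h1 h2
      linear_combination (h1 + h2) / 2
  have hdiag : ∀ k (hk : k < 2*d₁+1) (p0 : 0 < 2*d₁+1),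
      M ⟨k, hk⟩ ⟨k, hk⟩ = M ⟨0, p0⟩ ⟨0, p0⟩ := by
    intro k
    induction k with
    | zero => intro hk p0; rfl
    | succ k ih =>
      intro hk p0
      rw [← hStep k (by omega) (by omega) hk]
      exact ih (by omega) p0
  have hOff : ∀ a b (pa : a < 2*d₁+1) (pb : b < 2*d₁+1), a ≠ b → M ⟨a, pa⟩ ⟨b, pb⟩ = 0 := by
    intro a b pa pb hab
    by_cases ha0 : a = 0
    · subst ha0; exact hRow0 b (by omega) pb pa
    by_cases hb0 : b = 0
    · subst hb0; exact hCol0 a (by omega) pa pb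
    by_cases hat : a = 2*d₁
    · subst hat; exact hRowT b (by omega) pa pb
    by_cases hbt : b = 2*d₁
    · subst hbt; exact hColT a (by omega) pb pa
    by_cases hq : a / 2 = b / 2
    · exact hOffD ((a-1)/2) ((b-1)/2) (by omega) (by omega) (by omega) a b pa pb
        (by omega) (by omega)
    · exact hOffC (a/2) (b/2) (by omega) (by omega) hq a b pa pb (by omega) (by omega)
  refine ⟨M ⟨0, by omega⟩ ⟨0, by omega⟩, ?_⟩
  ext i j
  rcases i with ⟨a, pa⟩
  rcases j with ⟨b, pb⟩
  rw [Matrix.smul_apply, Matrix.one_apply, smul_eq_mul]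
  by_cases hab : a = b
  · subst hab
    rw [if_pos rfl, mul_one]
    exact hdiag a pa (by omega)
  · rw [if_neg (by simp [Fin.mk.injEq, hab] : ¬(⟨a, pa⟩ : Fin (2*d₁+1)) = ⟨b, pb⟩), mul_zero]
    exact hOff a b pa pb hab
end

section
/- Let M = (a_{ij})_{i,j=0}^{2} be a complex 3×3 matrix such that ⟨φ_s|(M ⊗ I₃)|φ_t⟩ = 0 for all s ≠ t, where |φ_1⟩,...,|φ_8⟩ are the 8 states |0⟩⊗(|0⟩±|1⟩), (|0⟩±|1⟩)⊗|2⟩, |2⟩⊗(|1⟩±|2⟩), (|1⟩±|2⟩)⊗|0⟩ in ℂ^3 ⊗ ℂ^3. Then M is a scalar multiple of the 3×3 identity matrix. -/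
/-! For product states `⟨a ⊗ b, (M ⊗ I) (c ⊗ d)⟩ = ⟨a, M c⟩ ⟨b, d⟩`. For suitable pairs of the
eight states the second factors overlap, `⟨b, d⟩ = 1`, so orthogonality says `⟨a, M c⟩ = 0` with
`a, c` among `|k⟩` and `|k⟩ ± |l⟩`. These linear conditions kill every off-diagonal entry of `M`
and force its diagonal entries to agree. -/

/-- basis vector |k⟩ of ℂ³ -/
def ket3 (k : ℕ) : Fin 3 → ℂ := fun i => if (i : ℕ) = k then 1 else 0

/-- |k⟩ ± |l⟩ in ℂ³ (`s = true` is `+`, `s = false` is `-`) -/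
def pm3 (k l : ℕ) (s : Bool) : Fin 3 → ℂ :=
  fun i => (if (i : ℕ) = k then 1 else 0) + (if s then 1 else -1) * (if (i : ℕ) = l then 1 else 0)

/-- product state a ⊗ b in ℂ³ ⊗ ℂ³ -/
def prod33 (a b : Fin 3 → ℂ) : Fin 3 × Fin 3 → ℂ := fun p => a p.1 * b p.2

/-- the 8 states of Eqs. (31) -/
def phi8 (k : Fin 8) : Fin 3 × Fin 3 → ℂ :=
  match (k : ℕ) / 2, ((k : ℕ) % 2 = 0 : Bool) with
  | 0, s => prod33 (ket3 0) (pm3 0 1 s)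
  | 1, s => prod33 (pm3 0 1 s) (ket3 2)
  | 2, s => prod33 (ket3 2) (pm3 1 2 s)
  | _, s => prod33 (pm3 1 2 s) (ket3 0)

/-- (M ⊗ I₃) applied to a vector of ℂ³ ⊗ ℂ³ -/
noncomputable def applyMI3 (M : Matrix (Fin 3) (Fin 3) ℂ) (x : Fin 3 × Fin 3 → ℂ) :
    Fin 3 × Fin 3 → ℂ :=
  fun p => ∑ k : Fin 3, M p.1 k * x (k, p.2)

open Matrix

theorem Matrix.IsDiag.eq_smul_one {n α : Type*} [DecidableEq n] [NonAssocSemiring α]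
    {A : Matrix n n α} (h : A.IsDiag) {c : α} (hc : ∀ i, A i i = c) : A = c • 1 := by
  rw [smul_one_eq_diagonal, ← h.diagonal_diag]
  exact congrArg diagonal (funext hc)

theorem sum_conj_prod33_mul_applyMI3 (M : Matrix (Fin 3) (Fin 3) ℂ) (a b c d : Fin 3 → ℂ) :
    ∑ p : Fin 3 × Fin 3, starRingEnd ℂ (prod33 a b p) * applyMI3 M (prod33 c d) p =
      (star a ⬝ᵥ M *ᵥ c) * (star b ⬝ᵥ d) := by
  simp only [prod33, applyMI3, Fintype.sum_prod_type, dotProduct, mulVec, Finset.sum_mul,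
    Finset.mul_sum, map_mul, Pi.star_apply, starRingEnd_apply]
  rw [Finset.sum_comm]
  congr! 3
  ring

theorem dotProduct_mulVec_eq_zero_or_of_phi8 {M : Matrix (Fin 3) (Fin 3) ℂ} {s t : Fin 8}
    (h : ∑ p : Fin 3 × Fin 3, starRingEnd ℂ (phi8 s p) * applyMI3 M (phi8 t) p = 0)
    {a b c d : Fin 3 → ℂ} (hs : phi8 s = prod33 a b) (ht : phi8 t = prod33 c d) :
    star a ⬝ᵥ M *ᵥ c = 0 ∨ star b ⬝ᵥ d = 0 := by
  rwa [hs, ht, sum_conj_prod33_mul_applyMI3, mul_eq_zero] at h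

theorem entry_relations_of_orthogonal {M : Matrix (Fin 3) (Fin 3) ℂ}
    (horth : ∀ s t : Fin 8, s ≠ t →
      ∑ p : Fin 3 × Fin 3, (starRingEnd ℂ) (phi8 s p) * applyMI3 M (phi8 t) p = 0) :
    M 0 2 = 0 ∧ M 0 1 + M 0 2 = 0 ∧ M 0 2 + M 1 2 = 0 ∧ M 2 0 = 0 ∧ M 2 0 + M 2 1 = 0 ∧
      M 0 0 - M 0 1 + M 1 0 - M 1 1 = 0 ∧ M 0 0 + M 0 1 - M 1 1 - M 1 0 = 0 ∧
      M 1 1 - M 1 2 + M 2 1 - M 2 2 = 0 := by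
  have e04 := dotProduct_mulVec_eq_zero_or_of_phi8 (horth 0 4 (by decide)) rfl rfl
  have e06 := dotProduct_mulVec_eq_zero_or_of_phi8 (horth 0 6 (by decide)) rfl rfl
  have e24 := dotProduct_mulVec_eq_zero_or_of_phi8 (horth 2 4 (by decide)) rfl rfl
  have e40 := dotProduct_mulVec_eq_zero_or_of_phi8 (horth 4 0 (by decide)) rfl rfl
  have e42 := dotProduct_mulVec_eq_zero_or_of_phi8 (horth 4 2 (by decide)) rfl rfl
  have e23 := dotProduct_mulVec_eq_zero_or_of_phi8 (horth 2 3 (by decide)) rfl rfl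
  have e32 := dotProduct_mulVec_eq_zero_or_of_phi8 (horth 3 2 (by decide)) rfl rfl
  have e67 := dotProduct_mulVec_eq_zero_or_of_phi8 (horth 6 7 (by decide)) rfl rfl
  simpa [ket3, pm3, dotProduct, mulVec, Fin.sum_univ_three, sub_eq_add_neg, add_assoc] using
    (⟨e04, e06, e24, e40, e42, e23, e32, e67⟩ : _ ∧ _ ∧ _ ∧ _ ∧ _ ∧ _ ∧ _ ∧ _)

theorem povm_trivial_dim3 (M : Matrix (Fin 3) (Fin 3) ℂ)
    (horth : ∀ s t : Fin 8, s ≠ t →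
      ∑ p : Fin 3 × Fin 3, (starRingEnd ℂ) (phi8 s p) * applyMI3 M (phi8 t) p = 0) :
    ∃ c : ℂ, M = c • (1 : Matrix (Fin 3) (Fin 3) ℂ) := by
  obtain ⟨h02, e06, e24, h20, e42, e23, e32, e67⟩ := entry_relations_of_orthogonal horth
  have h01 : M 0 1 = 0 := by linear_combination e06 - h02
  have h12 : M 1 2 = 0 := by linear_combination e24 - h02
  have h21 : M 2 1 = 0 := by linear_combination e42 - h20
  have h10 : M 1 0 = 0 := by linear_combination (e23 - e32) / 2 + h01
  have h11 : M 1 1 = M 0 0 := by linear_combination -(e23 + e32) / 2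
  have h22 : M 2 2 = M 0 0 := by linear_combination h11 - e67 - h12 + h21
  refine ⟨M 0 0, IsDiag.eq_smul_one (fun i j hij => ?_) fun i => ?_⟩
  · fin_cases i <;> fin_cases j <;> first | exact (hij rfl).elim | assumption
  · fin_cases i <;> first | rfl | assumption
end

section
/- Let m ≥ 3 and n ≥ 3 with m = 2d₁+1 and n = 2d₂+1. The states of Eqs. (45) together with the mn − 2(m+n) + 4 additional product states |i⟩⊗|j⟩ for 1 ≤ i ≤ m−2 and 1 ≤ j ≤ n−2 form a complete orthogonal set of mn vectors spanning ℂ^m ⊗ ℂ^n; in particular the set of Eqs. (45) is completable to an orthogonal product basis. -/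
/-- the states of Eqs. (45) together with the (m−2)(n−2) extra states |i⟩⊗|j⟩,
    1 ≤ i ≤ m−2, 1 ≤ j ≤ n−2 -/
def fullFamily (d₁ d₂ : ℕ) :
    (Idx45 d₁ d₂ ⊕ (Fin (2*d₁-1) × Fin (2*d₂-1))) →
      (Fin (2*d₁+1) × Fin (2*d₂+1) → ℂ)
  | .inl k => psi45 d₁ d₂ k
  | .inr (i, j) => prodMN (ketN (2*d₁+1) ((i : ℕ)+1)) (ketN (2*d₂+1) ((j : ℕ)+1))

/-! Every state is a product `a ⊗ b` whose factors are basis vectors `|k⟩` or `|k⟩ ± |k+1⟩`, and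
`⟨a ⊗ b, c ⊗ d⟩ = ⟨a, c⟩ ⟨b, d⟩`. Two such factors are orthogonal when their supports are disjoint
or when they are the two signs on the same support, and for any two distinct states of the family
one of the two factor pairs is of this kind. Nonzero mutually orthogonal vectors are linearly
independent, and there are `4d₁ + 4d₂ + (2d₁ - 1)(2d₂ - 1) = (2d₁ + 1)(2d₂ + 1)` of them, so they
span `ℂ^m ⊗ ℂ^n`. -/

open Matrix

theorem linearIndependent_of_dotProduct_eq_zero {ι κ R : Type*} [Fintype κ] [CommRing R]
    [NoZeroDivisors R] {v w : ι → κ → R} (hdiag : ∀ i, w i ⬝ᵥ v i ≠ 0)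
    (hoff : Pairwise fun i j => w i ⬝ᵥ v j = 0) : LinearIndependent R v := by
  rw [linearIndependent_iff']
  intro s g hg i hi
  have key : w i ⬝ᵥ ∑ j ∈ s, g j • v j = g i * (w i ⬝ᵥ v i) := by
    rw [dotProduct_sum, Finset.sum_eq_single i
      (fun j _ hji => by rw [dotProduct_smul, hoff hji.symm, smul_zero]) (fun h => absurd hi h),
      dotProduct_smul, smul_eq_mul]
  simpa [hg, hdiag i] using key.symm

theorem span_eq_top_of_dotProduct_eq_zero {ι κ K : Type*} [Fintype ι] [Fintype κ] [Field K]
    {v w : ι → κ → K} (hdiag : ∀ i, w i ⬝ᵥ v i ≠ 0) (hoff : Pairwise fun i j => w i ⬝ᵥ v j = 0)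
    (hcard : Fintype.card ι = Fintype.card κ) : Submodule.span K (Set.range v) = ⊤ :=
  (linearIndependent_of_dotProduct_eq_zero hdiag hoff).span_eq_top_of_card_eq_finrank'
    (by rw [Module.finrank_fintype_fun_eq_card, hcard])

theorem star_prodMN_dotProduct_prodMN {m n : ℕ} (a c : Fin m → ℂ) (b d : Fin n → ℂ) :
    star (prodMN a b) ⬝ᵥ prodMN c d = (star a ⬝ᵥ c) * (star b ⬝ᵥ d) := by
  simp only [dotProduct, Finset.sum_mul_sum, Fintype.sum_prod_type, prodMN, Pi.star_apply,
    star_mul']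
  exact Finset.sum_congr rfl fun i _ => Finset.sum_congr rfl fun j _ => by ring

theorem star_ketN (N k : ℕ) : star (ketN N k) = ketN N k := by
  ext i; simp [ketN, apply_ite star]

theorem pmN_eq_add (N k l : ℕ) (s : Bool) :
    pmN N k l s = ketN N k + (if s then 1 else -1 : ℂ) • ketN N l := by
  ext i; cases s <;> simp [pmN, ketN, neg_ite]

theorem star_pmN (N k l : ℕ) (s : Bool) : star (pmN N k l s) = pmN N k l s := by
  rw [pmN_eq_add, star_add, star_smul]; cases s <;> simp [star_ketN]

theorem ketN_dotProduct_ketN (N a b : ℕ) :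
    ketN N a ⬝ᵥ ketN N b = if a = b ∧ b < N then 1 else 0 := by
  split_ifs with h
  · obtain ⟨rfl, hb⟩ := h
    rw [dotProduct, Finset.sum_eq_single ⟨a, hb⟩] <;> intros <;> simp_all [ketN, Fin.ext_iff]
  · refine Finset.sum_eq_zero fun i _ => ?_
    simp only [ketN, mul_ite, mul_one, mul_zero]
    split_ifs <;> first | rfl | omega

theorem ketN_dotProduct_ketN_of_ne {N a b : ℕ} (h : a ≠ b) : ketN N a ⬝ᵥ ketN N b = 0 := by
  simp [ketN_dotProduct_ketN, h]

theorem ketN_dotProduct_ketN_self {N a : ℕ} (h : a < N) : ketN N a ⬝ᵥ ketN N a = 1 := by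
  simp [ketN_dotProduct_ketN, h]

theorem ketN_dotProduct_pmN {N a k l : ℕ} (hk : a ≠ k) (hl : a ≠ l) (s : Bool) :
    ketN N a ⬝ᵥ pmN N k l s = 0 := by
  rw [pmN_eq_add, dotProduct_add, dotProduct_smul, ketN_dotProduct_ketN_of_ne hk,
    ketN_dotProduct_ketN_of_ne hl, smul_zero, add_zero]

theorem pmN_dotProduct_ketN {N a k l : ℕ} (hk : k ≠ a) (hl : l ≠ a) (s : Bool) :
    pmN N k l s ⬝ᵥ ketN N a = 0 := by
  rw [dotProduct_comm, ketN_dotProduct_pmN hk.symm hl.symm]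

theorem pmN_dotProduct_pmN_of_disjoint {N k l k' l' : ℕ} (hk : k ≠ k') (hk' : k ≠ l')
    (hl : l ≠ k') (hl' : l ≠ l') (s t : Bool) : pmN N k l s ⬝ᵥ pmN N k' l' t = 0 := by
  rw [pmN_eq_add N k, add_dotProduct, smul_dotProduct, ketN_dotProduct_pmN hk hk',
    ketN_dotProduct_pmN hl hl', smul_zero, add_zero]

theorem pmN_dotProduct_pmN_self {N k l : ℕ} (hkl : k ≠ l) (hk : k < N) (hl : l < N)
    (s t : Bool) : pmN N k l s ⬝ᵥ pmN N k l t = if s = t then 2 else 0 := by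
  simp only [pmN_eq_add, add_dotProduct, dotProduct_add, smul_dotProduct, dotProduct_smul,
    ketN_dotProduct_ketN_self hk, ketN_dotProduct_ketN_self hl, ketN_dotProduct_ketN_of_ne hkl,
    ketN_dotProduct_ketN_of_ne hkl.symm, smul_eq_mul]
  cases s <;> cases t <;> norm_num

theorem pmN_dotProduct_pmN_succ {N j j' : ℕ} {s t : Bool} (hN : j + 1 < N)
    (hpar : j % 2 = j' % 2) (hne : j = j' → s ≠ t) :
    pmN N j (j + 1) s ⬝ᵥ pmN N j' (j' + 1) t = 0 := by
  obtain rfl | hj := eq_or_ne j j'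
  · simp [pmN_dotProduct_pmN_self (Nat.succ_ne_self j).symm (by omega) hN, hne rfl]
  · exact pmN_dotProduct_pmN_of_disjoint hj (by omega) (by omega) (by omega) s t

theorem fullFamily_orthogonal {d₁ d₂ : ℕ} (hd₁ : 1 ≤ d₁) (hd₂ : 1 ≤ d₂)
    {s t : Idx45 d₁ d₂ ⊕ (Fin (2*d₁-1) × Fin (2*d₂-1))} (hst : s ≠ t) :
    star (fullFamily d₁ d₂ s) ⬝ᵥ fullFamily d₁ d₂ t = 0 := by
  rcases s with (⟨δ, a⟩ | ⟨σ, a⟩ | ⟨δ, a⟩ | ⟨σ, a⟩) | ⟨i, j⟩ <;>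
    rcases t with (⟨δ', b⟩ | ⟨σ', b⟩ | ⟨δ', b⟩ | ⟨σ', b⟩) | ⟨i', j'⟩ <;>
    simp only [fullFamily, psi45, star_prodMN_dotProduct_prodMN, star_ketN, star_pmN] <;>
    try simp (disch := omega) only [ketN_dotProduct_ketN_of_ne, ketN_dotProduct_pmN,
      pmN_dotProduct_ketN, mul_zero, zero_mul]
  -- Left: the five pairs of states of the same kind.
  all_goals
    simp only [ne_eq, Sum.inl.injEq, Sum.inr.injEq, Prod.mk.injEq, Fin.ext_iff, not_and] at hst
  · rw [pmN_dotProduct_pmN_succ (by omega) (by omega) fun h => hst (by omega), mul_zero]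
  · rw [pmN_dotProduct_pmN_succ (by omega) (by omega) fun h => hst (by omega), zero_mul]
  · rw [pmN_dotProduct_pmN_succ (by omega) (by omega) fun h => hst (by omega), mul_zero]
  · rw [pmN_dotProduct_pmN_succ (by omega) (by omega) fun h => hst (by omega), zero_mul]
  · by_cases hi : (i : ℕ) = i'
    · rw [ketN_dotProduct_ketN_of_ne (by omega : (j : ℕ) + 1 ≠ j' + 1), mul_zero]
    · rw [ketN_dotProduct_ketN_of_ne (by omega : (i : ℕ) + 1 ≠ i' + 1), zero_mul]

theorem fullFamily_dotProduct_self_ne_zero (d₁ d₂ : ℕ)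
    (s : Idx45 d₁ d₂ ⊕ (Fin (2*d₁-1) × Fin (2*d₂-1))) :
    star (fullFamily d₁ d₂ s) ⬝ᵥ fullFamily d₁ d₂ s ≠ 0 := by
  rcases s with (⟨δ, a⟩ | ⟨σ, a⟩ | ⟨δ, a⟩ | ⟨σ, a⟩) | ⟨i, j⟩ <;>
    simp only [fullFamily, psi45, star_prodMN_dotProduct_prodMN, star_ketN, star_pmN] <;>
    simp (disch := omega) [ketN_dotProduct_ketN_self, pmN_dotProduct_pmN_self]

theorem card_fullFamily_index {d₁ d₂ : ℕ} (hd₁ : 1 ≤ d₁) (hd₂ : 1 ≤ d₂) :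
    Fintype.card (Idx45 d₁ d₂ ⊕ (Fin (2*d₁-1) × Fin (2*d₂-1))) =
      Fintype.card (Fin (2*d₁+1) × Fin (2*d₂+1)) := by
  simp only [Fintype.card_sum, Fintype.card_prod, Fintype.card_fin, Fintype.card_bool]
  zify [show 1 ≤ 2 * d₁ by omega, show 1 ≤ 2 * d₂ by omega]
  ring

theorem psi45_completable (d₁ d₂ : ℕ) (hd₁ : 1 ≤ d₁) (hd₂ : 1 ≤ d₂) :
    (∀ s t, s ≠ t →
      ∑ p : Fin (2*d₁+1) × Fin (2*d₂+1),
        (starRingEnd ℂ) (fullFamily d₁ d₂ s p) * fullFamily d₁ d₂ t p = 0) ∧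
    (∀ s, fullFamily d₁ d₂ s ≠ 0) ∧
    Submodule.span ℂ (Set.range (fullFamily d₁ d₂)) = ⊤ := by
  have hortho : Pairwise fun s t => star (fullFamily d₁ d₂ s) ⬝ᵥ fullFamily d₁ d₂ t = 0 :=
    fun _ _ => fullFamily_orthogonal hd₁ hd₂
  have hself := fullFamily_dotProduct_self_ne_zero d₁ d₂
  refine ⟨fun _ _ hst => hortho hst, fun s hs => hself s (by simp [hs]), ?_⟩
  exact span_eq_top_of_dotProduct_eq_zero hself hortho (card_fullFamily_index hd₁ hd₂)
end
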